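/- arXiv:0911.0126 — 6 statements merged into one kernel-verified Lean document; each statement's English description precedes it below -/
import Mathlib

section
/- Let n = 2k+1 with k ≥ 1. For every integer i with 1 ≤ i ≤ k+1, both i and −i are eigenvalues of the adjacency matrix of the middle-cube M_n, and each has multiplicity C(n, k+1−i) − C(n, k−i), where C(n, −1) = 0. -/
open Finset

/-- Vertices of the middle-cube `M_n` (with `n = 2k+1`): subsets of `S = {1,…,n}`
(modeled as `Fin n`) of cardinality `k` or `k+1`. -/
abbrev MidVert (n k : ℕ) := {A : Finset (Fin n) // A.card = k ∨ A.card = k + 1}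

/-- Adjacency matrix of the middle-cube: two distinct vertices `A`, `B` are adjacent
iff `A ⊂ B` or `B ⊂ A`. -/
def midAdj (n k : ℕ) : Matrix (MidVert n k) (MidVert n k) ℝ :=
  fun A B => if A.1 ⊂ B.1 ∨ B.1 ⊂ A.1 then 1 else 0

/-- Binomial coefficient `C(n, j)` for an integer `j`, with `C(n, j) = 0` for `j < 0`. -/
def binom (n : ℕ) (j : ℤ) : ℕ := if 0 ≤ j then n.choose j.toNat else 0

/-!
The middle cube is bipartite between the levels `k` and `k + 1` of the Boolean lattice, with
biadjacency matrix the inclusion matrix `W`. Hence for `t ≠ 0` its `t`-eigenspace is isomorphic to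
the `t²`-eigenspace of the down-up operator `WᵀW` on level `k`. Writing `U`, `D` for the up and
down operators, the commutation relation `D U - U D = (n - 2m) I` on level `m` carries the
eigenvectors of `D U` on level `m` with nonzero eigenvalue injectively to level `m + 1`, shifting
the eigenvalue by `n - 2(m + 1)`; the kernel of `D` supplies the new eigenvalue. By induction,
`(m + 1 - j)(n - m - j)` is an eigenvalue of `D U` on level `m` with multiplicity at least
`C(n, j) - C(n, j - 1)`, and for `2m ≤ n` these lower bounds add up to the dimension `C(n, m)`,
so they are exact. For `n = 2k + 1` and `m = k` the eigenvalues are the squares `(k + 1 - j)²`.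
-/

open Matrix Module

namespace Module.End

section CommRing

variable {R M N : Type*} [CommRing R] [AddCommGroup M] [Module R M] [AddCommGroup N] [Module R N]

theorem eigenspace_conj (e : M ≃ₗ[R] N) (f : End R M) (μ : R) :
    (e.conj f).eigenspace μ = (f.eigenspace μ).map (e : M →ₗ[R] N) := by
  ext w
  rw [Submodule.mem_map_equiv, mem_eigenspace_iff, mem_eigenspace_iff, LinearEquiv.conj_apply,
    LinearMap.comp_apply, LinearMap.comp_apply, LinearEquiv.coe_coe, LinearEquiv.coe_coe,
    ← e.symm.injective.eq_iff, e.symm_apply_apply, map_smul]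

theorem eigenspace_add_smul_id (f : End R M) (μ c : R) :
    (f + c • LinearMap.id).eigenspace (μ + c) = f.eigenspace μ := by
  ext v
  simp only [mem_eigenspace_iff, LinearMap.add_apply, LinearMap.smul_apply, LinearMap.id_apply,
    add_smul]
  exact add_left_inj _

end CommRing

section Field

variable {K V W ι : Type*} [Field K] [AddCommGroup V] [Module K V] [AddCommGroup W] [Module K W]

theorem sum_finrank_eigenspace_le [FiniteDimensional K V] [Fintype ι] (f : End K V)
    {μ : ι → K} (hμ : Function.Injective μ) :
    ∑ i, finrank K (f.eigenspace (μ i)) ≤ finrank K V := by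
  classical
  rw [← finrank_directSum]
  exact LinearMap.finrank_le_finrank_of_injective
    ((f.eigenspaces_iSupIndep.comp hμ).dfinsupp_lsum_injective)

theorem finrank_eigenspace_eq_of_sum_eq [FiniteDimensional K V] [Fintype ι] (f : End K V)
    {μ : ι → K} (hμ : Function.Injective μ) {d : ι → ℕ}
    (hd : ∀ i, d i ≤ finrank K (f.eigenspace (μ i))) (hsum : ∑ i, d i = finrank K V) (i : ι) :
    finrank K (f.eigenspace (μ i)) = d i := by
  have hle : ∑ i, d i = ∑ i, finrank K (f.eigenspace (μ i)) :=
    le_antisymm (sum_le_sum fun i _ => hd i) (hsum ▸ f.sum_finrank_eigenspace_le hμ)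
  exact ((sum_eq_sum_iff_of_le fun i _ => hd i).mp hle i (mem_univ i)).symm

theorem finrank_eigenspace_comp_le [FiniteDimensional K W] (U : V →ₗ[K] W) (D : W →ₗ[K] V)
    {μ : K} (hμ : μ ≠ 0) :
    finrank K (eigenspace (D ∘ₗ U) μ) ≤ finrank K (eigenspace (U ∘ₗ D) μ) := by
  have hmaps : ∀ v ∈ eigenspace (D ∘ₗ U) μ, U v ∈ eigenspace (U ∘ₗ D) μ := by
    intro v hv
    rw [mem_eigenspace_iff] at hv ⊢
    rw [LinearMap.comp_apply, ← LinearMap.comp_apply D U, hv, map_smul]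
  refine LinearMap.finrank_le_finrank_of_injective (f := U.restrict hmaps) fun x y hxy => ?_
  have hUxy : U x = U y := congrArg Subtype.val hxy
  have : μ • (x : V) = μ • (y : V) := by
    rw [← mem_eigenspace_iff.mp x.2, ← mem_eigenspace_iff.mp y.2, LinearMap.comp_apply,
      LinearMap.comp_apply, hUxy]
  exact Subtype.ext (smul_right_injective V hμ this)

theorem finrank_eigenspace_prod_swap (f : V →ₗ[K] W) (g : W →ₗ[K] V) {t : K} (ht : t ≠ 0) :
    finrank K (eigenspace ((g ∘ₗ LinearMap.snd K V W).prod (f ∘ₗ LinearMap.fst K V W)) t) =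
      finrank K (eigenspace (g ∘ₗ f) (t ^ 2)) := by
  set T := (g ∘ₗ LinearMap.snd K V W).prod (f ∘ₗ LinearMap.fst K V W)
  have mem_iff {v : V} {w : W} : (v, w) ∈ eigenspace T t ↔ g w = t • v ∧ f v = t • w :=
    mem_eigenspace_iff.trans Prod.ext_iff
  have hfst : ∀ x ∈ eigenspace T t, LinearMap.fst K V W x ∈ eigenspace (g ∘ₗ f) (t ^ 2) := by
    rintro ⟨v, w⟩ hx
    obtain ⟨hgw, hfv⟩ := mem_iff.mp hx
    rw [mem_eigenspace_iff, LinearMap.comp_apply, LinearMap.fst_apply, hfv, map_smul, hgw,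
      smul_smul, sq]
  have hlift : ∀ v ∈ eigenspace (g ∘ₗ f) (t ^ 2), LinearMap.id.prod (t⁻¹ • f) v ∈
      eigenspace T t := by
    intro v hv
    have hgf : g (f v) = t ^ 2 • v := mem_eigenspace_iff.mp hv
    refine mem_iff.mpr ⟨?_, ?_⟩
    · rw [LinearMap.smul_apply, map_smul, hgf, smul_smul, sq, inv_mul_cancel_left₀ ht]
      rfl
    · rw [LinearMap.smul_apply, smul_smul, mul_inv_cancel₀ ht, one_smul]
      rfl
  refine LinearEquiv.finrank_eq (LinearEquiv.ofLinearMap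
    ((LinearMap.fst K V W).restrict hfst) ((LinearMap.id.prod (t⁻¹ • f)).restrict hlift) ?_ ?_)
  · ext v
    rfl
  · ext ⟨⟨v, w⟩, hx⟩
    · rfl
    · change t⁻¹ • f v = w
      rw [(mem_iff.mp hx).2, smul_smul, inv_mul_cancel₀ ht, one_smul]

end Field

end Module.End

namespace Matrix

variable {K α β : Type*} [Field K] [Fintype α] [Fintype β] [DecidableEq α] [DecidableEq β]

theorem finrank_eigenspace_toLin'_submatrix (M : Matrix β β K) (e : α ≃ β) (μ : K) :
    finrank K (Module.End.eigenspace (toLin' (M.submatrix e e)) μ) =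
      finrank K (Module.End.eigenspace (toLin' M) μ) := by
  have : toLin' (M.submatrix e e) = (LinearEquiv.funCongrLeft K K e).conj (toLin' M) := by
    rw [toLin'_submatrix]
    rfl
  rw [this, Module.End.eigenspace_conj, LinearEquiv.finrank_map_eq]

theorem finrank_eigenspace_toLin'_fromBlocks_zero (B : Matrix α β K) (C : Matrix β α K) {t : K}
    (ht : t ≠ 0) :
    finrank K (Module.End.eigenspace (toLin' (fromBlocks 0 B C 0)) t) =
      finrank K (Module.End.eigenspace (toLin' (B * C)) (t ^ 2)) := by
  have : toLin' (fromBlocks 0 B C 0) = (LinearEquiv.sumArrowLequivProdArrow α β K K).symm.conj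
      ((toLin' B ∘ₗ LinearMap.snd K _ _).prod (toLin' C ∘ₗ LinearMap.fst K _ _)) := by
    refine LinearMap.ext fun x => ?_
    rw [toLin'_apply, fromBlocks_mulVec]
    ext (a | b) <;> simp <;> rfl
  rw [this, Module.End.eigenspace_conj, LinearEquiv.finrank_map_eq,
    Module.End.finrank_eigenspace_prod_swap _ _ ht, toLin'_mul]

end Matrix

theorem Nat.choose_lt_choose_succ {n r : ℕ} (h : 2 * r + 1 < n) :
    n.choose r < n.choose (r + 1) := by
  have hpos : 0 < n.choose r := Nat.choose_pos (by omega)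
  refine Nat.lt_of_mul_lt_mul_right (a := r + 1) ?_
  rw [Nat.choose_succ_right_eq]
  exact Nat.mul_lt_mul_of_pos_left (by omega) hpos

namespace Finset

variable {α : Type*}

theorem ssubset_or_ssubset_iff_subset_of_card_lt {S T : Finset α} (h : #S < #T) :
    S ⊂ T ∨ T ⊂ S ↔ S ⊆ T := by
  refine ⟨fun hST => hST.elim (fun h => h.subset) fun hTS => ?_, fun hST => .inl ?_⟩
  · exact absurd (card_lt_card hTS) (by omega)
  · exact Finset.ssubset_iff_subset_ne.mpr ⟨hST, by rintro rfl; omega⟩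

theorem not_ssubset_or_ssubset_of_card_eq {S T : Finset α} (h : #S = #T) :
    ¬(S ⊂ T ∨ T ⊂ S) := by
  rintro (hST | hTS)
  · exact absurd (card_lt_card hST) (by omega)
  · exact absurd (card_lt_card hTS) (by omega)

variable [Fintype α] [DecidableEq α]

theorem card_supersets_of_card_le (S : Finset α) {t : ℕ} (h : #S ≤ t) :
    #{B | #B = t ∧ S ⊆ B} = (Fintype.card α - #S).choose (t - #S) := by
  rw [← card_compl, ← card_powersetCard]
  refine card_nbij' (· \ S) (· ∪ S) ?_ ?_ ?_ ?_ <;> intro B hB <;>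
    simp only [mem_coe, mem_filter, mem_univ, true_and, mem_powersetCard,
      subset_compl_iff_disjoint_right] at hB ⊢
  · exact ⟨sdiff_disjoint, by rw [card_sdiff_of_subset hB.2, hB.1]⟩
  · exact ⟨by rw [card_union_of_disjoint hB.1, hB.2]; omega, subset_union_right⟩
  · exact sdiff_union_of_subset hB.2
  · exact union_sdiff_cancel_right hB.1

theorem card_supersets_of_lt_card (S : Finset α) {t : ℕ} (h : t < #S) :
    #{B | #B = t ∧ S ⊆ B} = 0 :=
  card_eq_zero.mpr <| filter_eq_empty_iff.mpr fun B _ ⟨hB, hSB⟩ => by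
    have := card_le_card hSB
    omega

theorem card_subsets (S : Finset α) (s : ℕ) : #{C | #C = s ∧ C ⊆ S} = (#S).choose s := by
  rw [← card_powersetCard]
  congr 1
  ext C
  simp [and_comm]

end Finset

namespace MiddleCube

abbrev Level (n m : ℕ) := {A : Finset (Fin n) // A.card = m}

def inclusionMatrix (n m : ℕ) : Matrix (Level n (m + 1)) (Level n m) ℝ :=
  fun B A => if A.1 ⊆ B.1 then 1 else 0

def downUp (n m : ℕ) : Matrix (Level n m) (Level n m) ℝ :=
  (inclusionMatrix n m)ᵀ * inclusionMatrix n m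

variable {n : ℕ}

theorem sum_level_boole {m : ℕ} (p : Finset (Fin n) → Prop) [DecidablePred p] :
    ∑ A : Level n m, (if p A.1 then (1 : ℝ) else 0) = #{A | #A = m ∧ p A} := by
  rw [← sum_subtype {A | #A = m} (by simp) fun A => if p A then (1 : ℝ) else 0, sum_boole,
    filter_filter]

theorem downUp_apply {m : ℕ} (A A' : Level n m) :
    downUp n m A A' = #{B | #B = m + 1 ∧ A.1 ∪ A'.1 ⊆ B} := by
  rw [downUp, mul_apply, ← sum_level_boole]
  refine sum_congr rfl fun B _ => ?_
  simp only [transpose_apply, inclusionMatrix, union_subset_iff, ite_zero_mul_ite_zero, mul_one]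

theorem mul_transpose_inclusionMatrix_apply {m : ℕ} (B B' : Level n (m + 1)) :
    (inclusionMatrix n m * (inclusionMatrix n m)ᵀ) B B' = #{A | #A = m ∧ A ⊆ B.1 ∩ B'.1} := by
  rw [mul_apply, ← sum_level_boole]
  refine sum_congr rfl fun A _ => ?_
  simp only [transpose_apply, inclusionMatrix, subset_inter_iff, ite_zero_mul_ite_zero, mul_one]

theorem downUp_zero : downUp n 0 = (n : ℝ) • 1 := by
  ext A A'
  have hA : A = A' := Subtype.ext <| by rw [card_eq_zero.mp A.2, card_eq_zero.mp A'.2]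
  subst hA
  rw [downUp_apply, union_self, card_supersets_of_card_le _ (by rw [A.2]; omega), A.2]
  simp

theorem downUp_succ (m : ℕ) :
    downUp n (m + 1) =
      inclusionMatrix n m * (inclusionMatrix n m)ᵀ + ((n : ℝ) - 2 * (m + 1)) • 1 := by
  ext B B'
  rw [downUp_apply, Matrix.add_apply, mul_transpose_inclusionMatrix_apply, Matrix.smul_apply]
  have hunion := card_union_add_card_inter B.1 B'.1
  rw [B.2, B'.2] at hunion
  by_cases hBB : B = B'
  · subst hBB
    have hn : m + 1 ≤ n := B.2 ▸ card_le_univ B.1 |>.trans_eq (Fintype.card_fin n)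
    rw [union_self, inter_self, card_supersets_of_card_le _ (by omega), card_subsets, B.2,
      one_apply_eq, smul_eq_mul, mul_one, Nat.add_sub_cancel_left, Nat.choose_one_right,
      Nat.choose_succ_self_right, Fintype.card_fin, Nat.cast_sub hn]
    push_cast
    ring
  · rw [one_apply_ne hBB, smul_zero, add_zero]
    -- both sides count `1` if `#(B ∪ B') = m + 2`, equivalently `#(B ∩ B') = m`, and `0` otherwise
    have hlt : m + 1 < #(B.1 ∪ B'.1) := by
      by_contra! hle
      exact hBB <| Subtype.ext <|
        (eq_of_subset_of_card_le subset_union_left (by omega)).trans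
          (eq_of_subset_of_card_le subset_union_right (by omega)).symm
    rcases (Nat.succ_le_of_lt hlt).eq_or_lt with heq | hgt
    · rw [card_supersets_of_card_le _ heq.ge, card_subsets, ← heq]
      simp [show #(B.1 ∩ B'.1) = m by omega]
    · rw [card_supersets_of_lt_card _ hgt, card_subsets, Nat.choose_eq_zero_of_lt (by omega)]

theorem finrank_level_fun (m : ℕ) : finrank ℝ (Level n m → ℝ) = n.choose m := by
  rw [finrank_fintype_fun_eq_card, Fintype.card_finset_len, Fintype.card_fin]

def eigenMult (n j : ℕ) : ℕ := binom n j - binom n ((j : ℤ) - 1)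

theorem eigenMult_zero (n : ℕ) : eigenMult n 0 = 1 := by
  simp [eigenMult, binom]

theorem eigenMult_succ (n j : ℕ) : eigenMult n (j + 1) = n.choose (j + 1) - n.choose j := by
  simp [eigenMult, binom, show (0 : ℤ) ≤ j + 1 by omega]

theorem eigenMult_pos {j : ℕ} (h : 2 * j ≤ n) : 0 < eigenMult n j := by
  cases j with
  | zero => simp [eigenMult_zero]
  | succ j => rw [eigenMult_succ]; exact Nat.sub_pos_of_lt (Nat.choose_lt_choose_succ (by omega))

theorem sum_range_eigenMult {m : ℕ} (h : 2 * m ≤ n) :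
    ∑ j ∈ range (m + 1), eigenMult n j = n.choose m := by
  induction m with
  | zero => simp [eigenMult_zero]
  | succ m ih =>
    rw [sum_range_succ, ih (by omega), eigenMult_succ]
    have := Nat.choose_lt_choose_succ (n := n) (r := m) (by omega)
    omega

def downUpEigenvalue (n m j : ℕ) : ℝ := ((m : ℝ) + 1 - j) * ((n : ℝ) - m - j)

theorem downUpEigenvalue_succ (m j : ℕ) :
    downUpEigenvalue n (m + 1) j = downUpEigenvalue n m j + ((n : ℝ) - 2 * (m + 1)) := by
  simp only [downUpEigenvalue]
  push_cast
  ring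

theorem downUpEigenvalue_succ_self (m : ℕ) : downUpEigenvalue n m (m + 1) = 0 := by
  simp [downUpEigenvalue]

theorem downUpEigenvalue_ne_zero {m j : ℕ} (hj : j ≤ m) (h : m + j < n) :
    downUpEigenvalue n m j ≠ 0 := by
  have hj' : (j : ℝ) ≤ m := by exact_mod_cast hj
  have h' : (m : ℝ) + j < n := by exact_mod_cast h
  exact mul_ne_zero (by linarith) (by linarith)

theorem downUpEigenvalue_injective {m : ℕ} (h : 2 * m ≤ n) :
    Function.Injective fun j : Fin (m + 1) => downUpEigenvalue n m j := by
  refine StrictAnti.injective fun j j' hjj' => ?_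
  have hj : (j : ℝ) < j' := by exact_mod_cast hjj'
  have hj' : (j' : ℝ) ≤ m := by exact_mod_cast Nat.lt_succ_iff.mp j'.2
  have h' : 2 * (m : ℝ) ≤ n := by exact_mod_cast h
  simp only [downUpEigenvalue]
  nlinarith

theorem toLin'_downUp (m : ℕ) :
    toLin' (downUp n m) = toLin' (inclusionMatrix n m)ᵀ ∘ₗ toLin' (inclusionMatrix n m) :=
  toLin'_mul _ _

theorem eigenspace_downUp_succ (m j : ℕ) :
    End.eigenspace (toLin' (downUp n (m + 1))) (downUpEigenvalue n (m + 1) j) =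
      End.eigenspace (toLin' (inclusionMatrix n m) ∘ₗ toLin' (inclusionMatrix n m)ᵀ)
        (downUpEigenvalue n m j) := by
  rw [downUp_succ, map_add, map_smul, toLin'_mul, toLin'_one, downUpEigenvalue_succ,
    End.eigenspace_add_smul_id]

theorem eigenMult_le_finrank_eigenspace_downUp {m j : ℕ} (hj : j ≤ m) (h : m + j ≤ n) :
    eigenMult n j ≤ finrank ℝ (End.eigenspace (toLin' (downUp n m)) (downUpEigenvalue n m j)) := by
  induction m generalizing j with
  | zero =>
    obtain rfl : j = 0 := by omega
    have htop : End.eigenspace (toLin' (downUp n 0)) (downUpEigenvalue n 0 0) = ⊤ := by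
      refine eq_top_iff.mpr fun v _ => End.mem_eigenspace_iff.mpr ?_
      rw [downUp_zero, map_smul, toLin'_one]
      simp [downUpEigenvalue]
    rw [htop, finrank_top, finrank_level_fun, eigenMult_zero, Nat.choose_zero_right]
  | succ m ih =>
    set U := toLin' (inclusionMatrix n m)
    set D := toLin' (inclusionMatrix n m)ᵀ
    rw [eigenspace_downUp_succ]
    rcases hj.lt_or_eq with hj | rfl
    · calc eigenMult n j
          ≤ finrank ℝ (End.eigenspace (D ∘ₗ U) (downUpEigenvalue n m j)) := by
            rw [← toLin'_downUp]; exact ih (by omega) (by omega)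
        _ ≤ _ := End.finrank_eigenspace_comp_le U D (downUpEigenvalue_ne_zero (by omega) (by omega))
    · have hrank := D.finrank_range_add_finrank_ker
      have hrange : finrank ℝ (LinearMap.range D) ≤ n.choose m :=
        (Submodule.finrank_le _).trans_eq (finrank_level_fun m)
      rw [finrank_level_fun] at hrank
      rw [downUpEigenvalue_succ_self, End.eigenspace_zero, eigenMult_succ]
      calc n.choose (m + 1) - n.choose m ≤ finrank ℝ (LinearMap.ker D) := by omega
        _ ≤ _ := Submodule.finrank_mono (LinearMap.ker_le_ker_comp D U)

theorem finrank_eigenspace_downUp {m j : ℕ} (h : 2 * m ≤ n) (hj : j ≤ m) :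
    finrank ℝ (End.eigenspace (toLin' (downUp n m)) (downUpEigenvalue n m j)) = eigenMult n j :=
  End.finrank_eigenspace_eq_of_sum_eq (toLin' (downUp n m)) (downUpEigenvalue_injective h)
    (d := fun j : Fin (m + 1) => eigenMult n j)
    (fun j => eigenMult_le_finrank_eigenspace_downUp (Nat.lt_succ_iff.mp j.2) (by omega))
    (by rw [Fin.sum_univ_eq_sum_range (eigenMult n), sum_range_eigenMult h, finrank_level_fun])
    ⟨j, Nat.lt_succ_of_le hj⟩

def levelSumEquiv (n k : ℕ) : Level n k ⊕ Level n (k + 1) ≃ MidVert n k :=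
  (subtypeOrEquiv _ _ <| Pi.disjoint_iff.mpr fun _ => Prop.disjoint_iff.mpr fun h => by
    omega).symm

theorem midAdj_submatrix_levelSumEquiv (k : ℕ) :
    (midAdj n k).submatrix (levelSumEquiv n k) (levelSumEquiv n k) =
      fromBlocks 0 (inclusionMatrix n k)ᵀ (inclusionMatrix n k) 0 := by
  ext (A | B) (A' | B') <;>
    simp only [submatrix_apply, levelSumEquiv, subtypeOrEquiv_symm_inl, subtypeOrEquiv_symm_inr,
      fromBlocks_apply₁₁, fromBlocks_apply₁₂, fromBlocks_apply₂₁, fromBlocks_apply₂₂, midAdj,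
      transpose_apply, inclusionMatrix, Matrix.zero_apply]
  · exact if_neg (not_ssubset_or_ssubset_of_card_eq (A.2.trans A'.2.symm))
  · exact if_congr (ssubset_or_ssubset_iff_subset_of_card_lt (by omega)) rfl rfl
  · exact if_congr (or_comm.trans (ssubset_or_ssubset_iff_subset_of_card_lt (by omega))) rfl rfl
  · exact if_neg (not_ssubset_or_ssubset_of_card_eq (B.2.trans B'.2.symm))

theorem finrank_eigenspace_midAdj (k : ℕ) {t : ℝ} (ht : t ≠ 0) :
    finrank ℝ (End.eigenspace (toLin' (midAdj n k)) t) =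
      finrank ℝ (End.eigenspace (toLin' (downUp n k)) (t ^ 2)) := by
  rw [← finrank_eigenspace_toLin'_submatrix _ (levelSumEquiv n k),
    midAdj_submatrix_levelSumEquiv, finrank_eigenspace_toLin'_fromBlocks_zero _ _ ht]
  rfl

theorem downUpEigenvalue_two_mul_add_one (k j : ℕ) :
    downUpEigenvalue (2 * k + 1) k j = ((k : ℝ) + 1 - j) ^ 2 := by
  simp only [downUpEigenvalue]
  push_cast
  ring

end MiddleCube

open MiddleCube

theorem middle_cube_eigenvalues_general (k : ℕ) (i : ℕ) (h1 : 1 ≤ i) (h2 : i ≤ k + 1) :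
    Module.End.HasEigenvalue (Matrix.toLin' (midAdj (2 * k + 1) k)) (i : ℝ) ∧
    Module.End.HasEigenvalue (Matrix.toLin' (midAdj (2 * k + 1) k)) (-(i : ℝ)) ∧
    Module.finrank ℝ
        (Module.End.eigenspace (Matrix.toLin' (midAdj (2 * k + 1) k)) (i : ℝ)) =
      binom (2 * k + 1) ((k : ℤ) + 1 - i) - binom (2 * k + 1) ((k : ℤ) - i) ∧
    Module.finrank ℝ
        (Module.End.eigenspace (Matrix.toLin' (midAdj (2 * k + 1) k)) (-(i : ℝ))) =
      binom (2 * k + 1) ((k : ℤ) + 1 - i) - binom (2 * k + 1) ((k : ℤ) - i) := by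
  have hmult : binom (2 * k + 1) ((k : ℤ) + 1 - i) - binom (2 * k + 1) ((k : ℤ) - i) =
      eigenMult (2 * k + 1) (k + 1 - i) := by
    have hj : (k : ℤ) + 1 - i = ((k + 1 - i : ℕ) : ℤ) := by omega
    have hj' : (k : ℤ) - i = ((k + 1 - i : ℕ) : ℤ) - 1 := by omega
    rw [hj, hj']
    rfl
  have hfinrank (t : ℝ) (ht : t ^ 2 = (i : ℝ) ^ 2) :
      finrank ℝ (End.eigenspace (toLin' (midAdj (2 * k + 1) k)) t) =
        eigenMult (2 * k + 1) (k + 1 - i) := by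
    have ht0 : t ≠ 0 := by
      rintro rfl
      nlinarith [(by exact_mod_cast h1 : (1 : ℝ) ≤ i)]
    have hi : (i : ℝ) ^ 2 = downUpEigenvalue (2 * k + 1) k (k + 1 - i) := by
      rw [downUpEigenvalue_two_mul_add_one]
      push_cast [Nat.cast_sub h2]
      ring
    rw [finrank_eigenspace_midAdj k ht0, ht, hi, finrank_eigenspace_downUp (by omega) (by omega)]
  have hpos : 0 < eigenMult (2 * k + 1) (k + 1 - i) := eigenMult_pos (by omega)
  have hasEigenvalue (t : ℝ) (ht : t ^ 2 = (i : ℝ) ^ 2) :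
      End.HasEigenvalue (toLin' (midAdj (2 * k + 1) k)) t :=
    End.hasEigenvalue_iff.mpr fun hbot => by
      rw [← Submodule.finrank_eq_zero, hfinrank t ht] at hbot
      omega
  exact ⟨hasEigenvalue _ rfl, hasEigenvalue _ (neg_sq _), (hfinrank _ rfl).trans hmult.symm,
    (hfinrank _ (neg_sq _)).trans hmult.symm⟩

/-- For `n = 2k+1` and `1 ≤ i ≤ k+1`, both `i` and `−i` are eigenvalues of the
adjacency matrix of the middle-cube `M_n`, each with multiplicity (= dimension of the
eigenspace) equal to `C(n, k+1−i) − C(n, k−i)`, where `C(n, −1) = 0`. -/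
theorem middle_cube_eigenvalues (k : ℕ) (hk : 1 ≤ k) (i : ℕ) (h1 : 1 ≤ i) (h2 : i ≤ k + 1) :
    Module.End.HasEigenvalue (Matrix.toLin' (midAdj (2 * k + 1) k)) (i : ℝ) ∧
    Module.End.HasEigenvalue (Matrix.toLin' (midAdj (2 * k + 1) k)) (-(i : ℝ)) ∧
    Module.finrank ℝ
        (Module.End.eigenspace (Matrix.toLin' (midAdj (2 * k + 1) k)) (i : ℝ)) =
      binom (2 * k + 1) ((k : ℤ) + 1 - i) - binom (2 * k + 1) ((k : ℤ) - i) ∧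
    Module.finrank ℝ
        (Module.End.eigenspace (Matrix.toLin' (midAdj (2 * k + 1) k)) (-(i : ℝ))) =
      binom (2 * k + 1) ((k : ℤ) + 1 - i) - binom (2 * k + 1) ((k : ℤ) - i) :=
  middle_cube_eigenvalues_general k i h1 h2
end

section
/- Let n = 2k+1 with k ≥ 1. Every eigenvalue of the adjacency matrix of the middle-cube M_n is an integer i with 1 ≤ |i| ≤ k+1. In particular, 0 is not an eigenvalue, so the adjacency matrix of M_n is nonsingular. -/
open Finset

/-! ### Up/down operators on the Boolean lattice -/

/-- Space of real functions on subsets of `Fin n`. -/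
abbrev MCV (n : ℕ) := Finset (Fin n) → ℝ

/-- Up operator. -/
def mcU (n : ℕ) : MCV n →ₗ[ℝ] MCV n where
  toFun f := fun B => ∑ x ∈ B, f (B.erase x)
  map_add' _ _ := by funext B; simp [Finset.sum_add_distrib]
  map_smul' _ _ := by funext B; simp [Finset.mul_sum]

/-- Down operator. -/
def mcD (n : ℕ) : MCV n →ₗ[ℝ] MCV n where
  toFun f := fun A => ∑ x ∈ Aᶜ, f (insert x A)
  map_add' _ _ := by funext A; simp [Finset.sum_add_distrib]
  map_smul' _ _ := by funext A; simp [Finset.mul_sum]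

/-- Complement operator. -/
def mcC (n : ℕ) : MCV n →ₗ[ℝ] MCV n where
  toFun f := fun A => f Aᶜ
  map_add' _ _ := rfl
  map_smul' _ _ := rfl

def mcT (n : ℕ) : MCV n →ₗ[ℝ] MCV n := (mcD n) ∘ₗ (mcU n)
def mcS (n : ℕ) : MCV n →ₗ[ℝ] MCV n := (mcU n) ∘ₗ (mcD n)

/-- A function supported on level `j`. -/
def mcLvl {n : ℕ} (j : ℕ) (f : MCV n) : Prop :=
  ∀ A : Finset (Fin n), A.card ≠ j → f A = 0

variable {n : ℕ}

lemma mcLvl_U {j : ℕ} {f : MCV n} (hf : mcLvl j f) : mcLvl (j + 1) (mcU n f) := by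
  intro B hB
  apply Finset.sum_eq_zero
  intro x hx
  have h1 := Finset.card_erase_of_mem hx
  have h2 : 1 ≤ B.card := Finset.card_pos.mpr ⟨x, hx⟩
  exact hf _ (by omega)

lemma mcLvl_D {j : ℕ} {f : MCV n} (hf : mcLvl (j + 1) f) : mcLvl j (mcD n f) := by
  intro A hA
  apply Finset.sum_eq_zero
  intro x hx
  apply hf
  rw [Finset.card_insert_of_notMem (Finset.mem_compl.mp hx)]
  omega

lemma mcLvl_T {j : ℕ} {f : MCV n} (hf : mcLvl j f) : mcLvl j (mcT n f) :=
  mcLvl_D (mcLvl_U hf)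

lemma mcLvl_S {j : ℕ} {f : MCV n} (hf : mcLvl (j + 1) f) : mcLvl (j + 1) (mcS n f) :=
  mcLvl_U (mcLvl_D hf)

lemma mcLvl_sub_smul {j : ℕ} {f g : MCV n} (hf : mcLvl j f) (hg : mcLvl j g) (c : ℝ) :
    mcLvl j (f - c • g) := by
  intro A hA
  simp [hf A hA, hg A hA]

/-- The commutator identity, pointwise. -/
lemma mc_comm (f : MCV n) (A : Finset (Fin n)) :
    mcT n f A = mcS n f A + ((n : ℝ) - 2 * A.card) * f A := by
  have hT : mcT n f A
      = ∑ x ∈ Aᶜ, (f A + ∑ y ∈ A, f (insert x (A.erase y))) := by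
    refine Finset.sum_congr rfl fun x hx => ?_
    have hxA : x ∉ A := Finset.mem_compl.mp hx
    show ∑ y ∈ insert x A, f ((insert x A).erase y) = _
    rw [Finset.sum_insert hxA, Finset.erase_insert hxA]
    congr 1
    refine Finset.sum_congr rfl fun y hy => ?_
    congr 1
    refine Finset.erase_insert_of_ne ?_
    rintro rfl; exact hxA hy
  have hS : mcS n f A
      = ∑ y ∈ A, (f A + ∑ x ∈ Aᶜ, f (insert x (A.erase y))) := by
    refine Finset.sum_congr rfl fun y hy => ?_
    show ∑ x ∈ (A.erase y)ᶜ, f (insert x (A.erase y)) = _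
    rw [compl_erase, Finset.sum_insert (by simpa using hy), Finset.insert_erase hy]
  have hA : A.card ≤ n := by simpa using Finset.card_le_univ A
  rw [hT, hS, Finset.sum_add_distrib, Finset.sum_add_distrib, Finset.sum_const,
    Finset.sum_const, Finset.sum_comm, Finset.card_compl, Fintype.card_fin,
    nsmul_eq_mul, nsmul_eq_mul, Nat.cast_sub hA]
  ring

/-- On level `j`, `T = S + (n - 2j)`. -/
lemma mc_level_id {j : ℕ} {f : MCV n} (hf : mcLvl j f) :
    mcT n f - ((n : ℝ) - 2 * j) • f = mcS n f := by
  funext A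
  by_cases hA : A.card = j
  · simp only [Pi.sub_apply, Pi.smul_apply, smul_eq_mul, mc_comm f A, hA]
    ring
  · simp only [Pi.sub_apply, Pi.smul_apply, smul_eq_mul, mc_comm f A, hf A hA]
    ring

lemma mcUC (f : MCV n) : mcU n (mcC n f) = mcC n (mcD n f) := by
  funext B
  show ∑ y ∈ B, f ((B.erase y)ᶜ) = ∑ x ∈ (Bᶜ)ᶜ, f (insert x Bᶜ)
  rw [compl_compl]
  exact Finset.sum_congr rfl fun y _ => by rw [compl_erase]

/-! ### Annihilating polynomial machinery -/

/-- Apply the product `∏ (T - c)` over a list of constants `c`. -/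
def applyP (T : MCV n →ₗ[ℝ] MCV n) : List ℝ → MCV n → MCV n
  | [], f => f
  | c :: l, f => applyP T l (T f - c • f)

lemma applyP_smul (T : MCV n →ₗ[ℝ] MCV n) (l : List ℝ) (d : ℝ) (f : MCV n) :
    applyP T l (d • f) = d • applyP T l f := by
  induction l generalizing f with
  | nil => rfl
  | cons c l ih =>
    show applyP T l _ = _
    rw [map_smul, smul_comm c d, ← smul_sub, ih]
    rfl

lemma applyP_eig (T : MCV n →ₗ[ℝ] MCV n) (l : List ℝ) (e : ℝ) (f : MCV n)
    (hf : T f = e • f) : applyP T l f = (l.map (fun c => e - c)).prod • f := by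
  induction l with
  | nil => simp [applyP]
  | cons c l ih =>
    show applyP T l (T f - c • f) = _
    rw [hf, ← sub_smul, applyP_smul, ih, List.map_cons, List.prod_cons, smul_smul]

lemma applyP_SU (l : List ℝ) (h : MCV n) :
    applyP (mcS n) l (mcU n h) = mcU n (applyP (mcT n) l h) := by
  induction l generalizing h with
  | nil => rfl
  | cons c l ih =>
    show applyP (mcS n) l (mcS n (mcU n h) - c • mcU n h) = _
    have : mcS n (mcU n h) - c • mcU n h = mcU n (mcT n h - c • h) := by
      rw [map_sub, map_smul]; rfl
    rw [this, ih]
    rfl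

lemma applyP_shift (m : ℕ) (l : List ℝ) (g : MCV n) (hg : mcLvl (m + 1) g) :
    applyP (mcT n) (l.map (fun c => c + ((n : ℝ) - 2 * (m + 1)))) g
      = applyP (mcS n) l g := by
  induction l generalizing g with
  | nil => rfl
  | cons c l ih =>
    show applyP (mcT n) (l.map _) (mcT n g - (c + ((n:ℝ) - 2 * (m+1))) • g) = _
    have key : mcT n g - (c + ((n:ℝ) - 2 * (m+1))) • g = mcS n g - c • g := by
      have := mc_level_id hg
      push_cast at this
      rw [add_smul, ← sub_sub, sub_right_comm, this]
    rw [key, ih _ (mcLvl_sub_smul (mcLvl_S hg) hg c)]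
    rfl

/-- The list of eigenvalue candidates for `T = DU` on level `j`. -/
noncomputable def mcLst (n : ℕ) : ℕ → List ℝ
  | 0 => [(n : ℝ)]
  | j + 1 => ((n:ℝ) - 2 * (j + 1)) :: (mcLst n j).map (fun c => c + ((n:ℝ) - 2 * (j + 1)))

lemma mcD_bottom (f : MCV n) (hf : mcLvl 0 f) : mcD n f = 0 := by
  funext A
  refine Finset.sum_eq_zero fun x hx => hf _ ?_
  simp [Finset.card_insert_of_notMem (Finset.mem_compl.mp hx)]

/-- Main annihilation theorem: `∏_{c ∈ mcLst n j} (T - c)` kills level `j`. -/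
theorem mc_main (j : ℕ) : ∀ f : MCV n, mcLvl j f → applyP (mcT n) (mcLst n j) f = 0 := by
  induction j with
  | zero =>
    intro f hf
    show mcT n f - (n : ℝ) • f = 0
    have h1 : mcS n f = 0 := by
      show mcU n (mcD n f) = 0
      rw [mcD_bottom f hf, map_zero]
    have h2 := mc_level_id hf
    rw [← h2] at h1
    rw [← h1]
    norm_num
  | succ j ih =>
    intro f hf
    show applyP (mcT n) ((mcLst n j).map _) (mcT n f - ((n:ℝ) - 2 * (j+1)) • f) = 0
    have hid := mc_level_id hf
    push_cast at hid
    rw [hid, applyP_shift j _ _ (mcLvl_S hf)]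
    show applyP (mcS n) (mcLst n j) (mcU n (mcD n f)) = 0
    rw [applyP_SU, ih (mcD n f) (mcLvl_D hf), map_zero]

lemma mcLst_mem (j : ℕ) : ∀ c ∈ mcLst n j,
    ∃ t : ℕ, t ≤ j ∧ c = ((j : ℝ) - t + 1) * ((n : ℝ) - j - t) := by
  induction j with
  | zero =>
    intro c hc
    simp only [mcLst, List.mem_singleton] at hc
    exact ⟨0, le_refl 0, by rw [hc]; push_cast; ring⟩
  | succ j ih =>
    intro c hc
    simp only [mcLst, List.mem_cons, List.mem_map] at hc
    rcases hc with rfl | ⟨c', hc', rfl⟩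
    · exact ⟨j + 1, le_refl _, by push_cast; ring⟩
    · obtain ⟨t, ht, rfl⟩ := ih c' hc'
      exact ⟨t, by omega, by push_cast; ring⟩

/-! ### Reindexing covers -/

lemma sdiff_cover {X Y : Finset (Fin n)} (hXY : X ⊂ Y) (hc : Y.card = X.card + 1) :
    ∃ a, Y \ X = {a} ∧ a ∉ X ∧ insert a X = Y := by
  have h1 : (Y \ X).card = 1 := by
    rw [Finset.card_sdiff_of_subset hXY.subset]; omega
  obtain ⟨a, ha⟩ := Finset.card_eq_one.mp h1
  have haY : a ∈ Y \ X := ha ▸ Finset.mem_singleton_self a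
  have haX : a ∉ X := (Finset.mem_sdiff.mp haY).2
  refine ⟨a, ha, haX, ?_⟩
  refine Finset.eq_of_subset_of_card_le ?_ ?_
  · intro z hz
    rcases Finset.mem_insert.mp hz with rfl | hz
    · exact (Finset.mem_sdiff.mp haY).1
    · exact hXY.subset hz
  · rw [Finset.card_insert_of_notMem haX]; omega

lemma insert_sdiff_self' {X : Finset (Fin n)} {x : Fin n} (hx : x ∉ X) :
    insert x X \ X = {x} := by
  ext z
  simp only [Finset.mem_sdiff, Finset.mem_insert, Finset.mem_singleton]
  constructor
  · rintro ⟨rfl | hz, hzX⟩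
    · rfl
    · exact absurd hz hzX
  · rintro rfl; exact ⟨Or.inl rfl, hx⟩

lemma sum_covers (X : Finset (Fin n)) (g : Finset (Fin n) → ℝ) :
    ∑ x ∈ Xᶜ, g (insert x X)
      = ∑ Y ∈ Finset.univ.filter (fun Y => X ⊂ Y ∧ Y.card = X.card + 1), g Y := by
  have hne : ∀ Y (hY : Y ∈ Finset.univ.filter
      (fun Y => X ⊂ Y ∧ Y.card = X.card + 1)), (Y \ X).Nonempty := by
    intro Y hY
    simp only [Finset.mem_filter] at hY
    obtain ⟨a, ha, -, -⟩ := sdiff_cover hY.2.1 hY.2.2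
    exact ⟨a, ha ▸ Finset.mem_singleton_self a⟩
  refine Finset.sum_bij' (fun x _ => insert x X) (fun Y hY => (Y \ X).min' (hne Y hY))
    ?_ ?_ ?_ ?_ ?_
  · intro x hx
    have hxX : x ∉ X := Finset.mem_compl.mp hx
    simp only [Finset.mem_filter, Finset.mem_univ, true_and]
    exact ⟨Finset.ssubset_insert hxX, Finset.card_insert_of_notMem hxX⟩
  · intro Y hY
    simp only [Finset.mem_filter] at hY
    rw [Finset.mem_compl]
    have := Finset.min'_mem (Y \ X) (hne Y (by simp [hY.2]))
    exact fun h => (Finset.mem_sdiff.mp this).2 h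
  · intro x hx
    have hxX : x ∉ X := Finset.mem_compl.mp hx
    simp only [insert_sdiff_self' hxX, Finset.min'_singleton]
  · intro Y hY
    simp only [Finset.mem_filter] at hY
    obtain ⟨a, ha, haX, hins⟩ := sdiff_cover hY.2.1 hY.2.2
    simp only [ha, Finset.min'_singleton, hins]
  · intro x hx; rfl

lemma sdiff_covered {X Y : Finset (Fin n)} (hXY : Y ⊂ X) (hc : Y.card + 1 = X.card) :
    ∃ a, X \ Y = {a} ∧ a ∈ X ∧ X.erase a = Y := by
  have h1 : (X \ Y).card = 1 := by
    rw [Finset.card_sdiff_of_subset hXY.subset]; omega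
  obtain ⟨a, ha⟩ := Finset.card_eq_one.mp h1
  have haXY : a ∈ X \ Y := ha ▸ Finset.mem_singleton_self a
  have haX : a ∈ X := (Finset.mem_sdiff.mp haXY).1
  have haY : a ∉ Y := (Finset.mem_sdiff.mp haXY).2
  refine ⟨a, ha, haX, ?_⟩
  refine (Finset.eq_of_subset_of_card_le ?_ ?_).symm
  · intro z hz
    exact Finset.mem_erase.mpr ⟨fun h => haY (h ▸ hz), hXY.subset hz⟩
  · rw [Finset.card_erase_of_mem haX]; omega

lemma sum_covered (X : Finset (Fin n)) (g : Finset (Fin n) → ℝ) :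
    ∑ y ∈ X, g (X.erase y)
      = ∑ Y ∈ Finset.univ.filter (fun Y => Y ⊂ X ∧ Y.card + 1 = X.card), g Y := by
  have hne : ∀ Y (hY : Y ∈ Finset.univ.filter
      (fun Y => Y ⊂ X ∧ Y.card + 1 = X.card)), (X \ Y).Nonempty := by
    intro Y hY
    simp only [Finset.mem_filter] at hY
    obtain ⟨a, ha, -, -⟩ := sdiff_covered hY.2.1 hY.2.2
    exact ⟨a, ha ▸ Finset.mem_singleton_self a⟩
  refine Finset.sum_bij' (fun y _ => X.erase y) (fun Y hY => (X \ Y).min' (hne Y hY))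
    ?_ ?_ ?_ ?_ ?_
  · intro y hy
    simp only [Finset.mem_filter, Finset.mem_univ, true_and]
    exact ⟨Finset.erase_ssubset hy,
      by have := Finset.card_pos.mpr ⟨y, hy⟩; rw [Finset.card_erase_of_mem hy]; omega⟩
  · intro Y hY
    simp only [Finset.mem_filter] at hY
    have := Finset.min'_mem (X \ Y) (hne Y (by simp [hY.2]))
    exact (Finset.mem_sdiff.mp this).1
  · intro y hy
    have h : X \ X.erase y = {y} := by
      ext z
      simp only [Finset.mem_sdiff, Finset.mem_erase, Finset.mem_singleton, not_and]
      constructor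
      · rintro ⟨hzX, hz⟩
        by_contra hzy
        exact (hz hzy) hzX
      · rintro rfl; exact ⟨hy, fun h => absurd rfl h⟩
    simp only [h, Finset.min'_singleton]
  · intro Y hY
    simp only [Finset.mem_filter] at hY
    obtain ⟨a, ha, haX, hera⟩ := sdiff_covered hY.2.1 hY.2.2
    simp only [ha, Finset.min'_singleton, hera]
  · intro y hy; rfl

/-! ### The adjacency operator in terms of up/down operators -/

lemma mulVec_eq_filter_sum (k : ℕ) (v : MidVert (2*k+1) k → ℝ)
    (f0 f1 : MCV (2*k+1))
    (hvext : ∀ B : MidVert (2*k+1) k, v B = f0 B.1 + f1 B.1)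
    (hlvl0 : mcLvl k f0) (hlvl1 : mcLvl (k+1) f1)
    (A : MidVert (2*k+1) k) :
    (midAdj (2*k+1) k).mulVec v A
      = ∑ Y ∈ Finset.univ.filter (fun Y => A.1 ⊂ Y ∨ Y ⊂ A.1), (f0 Y + f1 Y) := by
  set F := fun Y : Finset (Fin (2*k+1)) =>
    (if A.1 ⊂ Y ∨ Y ⊂ A.1 then (1:ℝ) else 0) * (f0 Y + f1 Y) with hF
  have h1 : (midAdj (2*k+1) k).mulVec v A = ∑ B : MidVert (2*k+1) k, F B.1 := by
    show ∑ B : MidVert (2*k+1) k, midAdj (2*k+1) k A B * v B = _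
    refine Finset.sum_congr rfl fun B _ => ?_
    rw [hvext B]
    rfl
  have h3 : ∑ B : MidVert (2*k+1) k, F B.1
      = ∑ Y ∈ Finset.univ.filter (fun Y => Y.card = k ∨ Y.card = k+1), F Y :=
    (Finset.sum_subtype _ (fun Y => by simp) F).symm
  have h4 : ∑ Y ∈ Finset.univ.filter (fun Y => Y.card = k ∨ Y.card = k+1), F Y
      = ∑ Y ∈ Finset.univ, F Y := by
    refine Finset.sum_filter_of_ne fun Y _ hFY => ?_
    by_contra hcard
    push_neg at hcard
    apply hFY
    rw [hF]
    simp only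
    rw [hlvl0 Y hcard.1, hlvl1 Y hcard.2, add_zero, mul_zero]
  have h5 : ∑ Y ∈ Finset.univ, F Y
      = ∑ Y ∈ Finset.univ.filter (fun Y => A.1 ⊂ Y ∨ Y ⊂ A.1), (f0 Y + f1 Y) := by
    rw [Finset.sum_filter]
    refine Finset.sum_congr rfl fun Y _ => ?_
    rw [hF]
    simp only [ite_mul, one_mul, zero_mul]
  rw [h1, h3, h4, h5]

/-- The spectral conclusion on level `k`. -/
lemma mc_spec (k : ℕ) (f : MCV (2*k+1)) (hf : mcLvl k f) (hfne : f ≠ 0) (e : ℝ)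
    (he : mcT (2*k+1) f = e • f) :
    ∃ t : ℕ, t ≤ k ∧ e = ((k:ℝ) + 1 - t)^2 := by
  have h0 := mc_main k f hf
  rw [applyP_eig _ _ e f he] at h0
  rcases smul_eq_zero.mp h0 with h | h
  · obtain ⟨c, hcmem, hc0⟩ := List.mem_map.mp (List.prod_eq_zero_iff.mp h)
    obtain ⟨t, ht, rfl⟩ := mcLst_mem k c hcmem
    refine ⟨t, ht, ?_⟩
    have he2 : e = ((k:ℝ) - t + 1) * (((2*k+1 : ℕ) : ℝ) - k - t) := by linarith [hc0]
    rw [he2]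
    push_cast
    ring
  · exact absurd h hfne

set_option maxHeartbeats 1000000 in
lemma mid_eig_char (k : ℕ) : ∀ μ : ℝ,
    Module.End.HasEigenvalue (Matrix.toLin' (midAdj (2 * k + 1) k)) μ →
      ∃ i : ℤ, 1 ≤ |i| ∧ |i| ≤ (k : ℤ) + 1 ∧ μ = (i : ℝ) := by
    intro μ h
    obtain ⟨v, hv⟩ := h.exists_hasEigenvector
    have hveq : (midAdj (2*k+1) k).mulVec v = μ • v := by
      rw [← Matrix.toLin'_apply]
      exact Module.End.mem_eigenspace_iff.mp hv.1
    have hvne : v ≠ 0 := hv.2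
    set f0 : MCV (2*k+1) := fun X => if h : X.card = k then v ⟨X, Or.inl h⟩ else 0 with hf0
    set f1 : MCV (2*k+1) := fun X => if h : X.card = k+1 then v ⟨X, Or.inr h⟩ else 0 with hf1
    have hlvl0 : mcLvl k f0 := fun A hA => dif_neg hA
    have hlvl1 : mcLvl (k+1) f1 := fun A hA => dif_neg hA
    have hvext : ∀ B : MidVert (2*k+1) k, v B = f0 B.1 + f1 B.1 := by
      rintro ⟨X, hX | hX⟩
      · show v _ = f0 X + f1 X
        rw [hf0, hf1]
        simp only
        rw [dif_pos hX, dif_neg (by omega), add_zero]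
      · show v _ = f0 X + f1 X
        rw [hf0, hf1]
        simp only
        rw [dif_pos hX, dif_neg (by omega), zero_add]
    -- the two eigen-equations
    have hD : mcD (2*k+1) f1 = μ • f0 := by
      funext X
      by_cases hX : X.card = k
      · have h1 : (midAdj (2*k+1) k).mulVec v ⟨X, Or.inl hX⟩
            = ∑ Y ∈ Finset.univ.filter (fun Y => X ⊂ Y ∨ Y ⊂ X), (f0 Y + f1 Y) :=
          mulVec_eq_filter_sum k v f0 f1 hvext hlvl0 hlvl1 ⟨X, Or.inl hX⟩
        have h2 : ∑ Y ∈ Finset.univ.filter (fun Y => X ⊂ Y ∨ Y ⊂ X), (f0 Y + f1 Y)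
            = ∑ Y ∈ Finset.univ.filter (fun Y => X ⊂ Y ∧ Y.card = X.card + 1), f1 Y := by
          rw [Finset.sum_filter, Finset.sum_filter]
          refine Finset.sum_congr rfl fun Y _ => ?_
          by_cases h1' : Y.card = k + 1
          · have hY3 : ¬ Y ⊂ X := fun h => absurd (Finset.card_lt_card h) (by omega)
            by_cases h2' : X ⊂ Y
            · rw [if_pos (Or.inl h2'), if_pos ⟨h2', by omega⟩, hlvl0 Y (by omega), zero_add]
            · rw [if_neg (by tauto), if_neg (by tauto)]
          · have hcond2 : ¬ (X ⊂ Y ∧ Y.card = X.card + 1) := by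
              rintro ⟨-, hcc⟩; omega
            rw [if_neg hcond2]
            by_cases hc : X ⊂ Y ∨ Y ⊂ X
            · have hf0Y : f0 Y = 0 := by
                apply hlvl0
                rcases hc with hcc | hcc
                · have := Finset.card_lt_card hcc; omega
                · have := Finset.card_lt_card hcc; omega
              rw [if_pos hc, hf0Y, hlvl1 Y h1', add_zero]
            · rw [if_neg hc]
        have h3 : mcD (2*k+1) f1 X
            = ∑ Y ∈ Finset.univ.filter (fun Y => X ⊂ Y ∧ Y.card = X.card + 1), f1 Y :=
          sum_covers X f1
        have h4 : (midAdj (2*k+1) k).mulVec v ⟨X, Or.inl hX⟩ = μ * v ⟨X, Or.inl hX⟩ := by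
          rw [hveq]; rfl
        have h5 : f0 X = v ⟨X, Or.inl hX⟩ := dif_pos hX
        show mcD (2*k+1) f1 X = μ * f0 X
        exact h3.trans (h2.symm.trans (h1.symm.trans (h4.trans (by rw [h5]))))
      · show mcD (2*k+1) f1 X = μ * f0 X
        rw [mcLvl_D hlvl1 X hX, hlvl0 X hX, mul_zero]
    have hU : mcU (2*k+1) f0 = μ • f1 := by
      funext X
      by_cases hX : X.card = k + 1
      · have h1 : (midAdj (2*k+1) k).mulVec v ⟨X, Or.inr hX⟩
            = ∑ Y ∈ Finset.univ.filter (fun Y => X ⊂ Y ∨ Y ⊂ X), (f0 Y + f1 Y) :=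
          mulVec_eq_filter_sum k v f0 f1 hvext hlvl0 hlvl1 ⟨X, Or.inr hX⟩
        have h2 : ∑ Y ∈ Finset.univ.filter (fun Y => X ⊂ Y ∨ Y ⊂ X), (f0 Y + f1 Y)
            = ∑ Y ∈ Finset.univ.filter (fun Y => Y ⊂ X ∧ Y.card + 1 = X.card), f0 Y := by
          rw [Finset.sum_filter, Finset.sum_filter]
          refine Finset.sum_congr rfl fun Y _ => ?_
          by_cases h1' : Y.card = k
          · have hY3 : ¬ X ⊂ Y := fun h => absurd (Finset.card_lt_card h) (by omega)
            by_cases h2' : Y ⊂ X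
            · rw [if_pos (Or.inr h2'), if_pos ⟨h2', by omega⟩, hlvl1 Y (by omega), add_zero]
            · rw [if_neg (by tauto), if_neg (by tauto)]
          · have hcond2 : ¬ (Y ⊂ X ∧ Y.card + 1 = X.card) := by
              rintro ⟨-, hcc⟩; omega
            rw [if_neg hcond2]
            by_cases hc : X ⊂ Y ∨ Y ⊂ X
            · have hf1Y : f1 Y = 0 := by
                apply hlvl1
                rcases hc with hcc | hcc
                · have := Finset.card_lt_card hcc; omega
                · have := Finset.card_lt_card hcc; omega
              rw [if_pos hc, hf1Y, hlvl0 Y h1', add_zero]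
            · rw [if_neg hc]
        have h3 : mcU (2*k+1) f0 X
            = ∑ Y ∈ Finset.univ.filter (fun Y => Y ⊂ X ∧ Y.card + 1 = X.card), f0 Y :=
          sum_covered X f0
        have h4 : (midAdj (2*k+1) k).mulVec v ⟨X, Or.inr hX⟩ = μ * v ⟨X, Or.inr hX⟩ := by
          rw [hveq]; rfl
        have h5 : f1 X = v ⟨X, Or.inr hX⟩ := dif_pos hX
        show mcU (2*k+1) f0 X = μ * f1 X
        exact h3.trans (h2.symm.trans (h1.symm.trans (h4.trans (by rw [h5]))))
      · show mcU (2*k+1) f0 X = μ * f1 X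
        rw [mcLvl_U hlvl0 X hX, hlvl1 X hX, mul_zero]
    -- now the spectral argument
    have hT0 : mcT (2*k+1) f0 = (μ*μ) • f0 := by
      show mcD (2*k+1) (mcU (2*k+1) f0) = _
      rw [hU, map_smul, hD, smul_smul]
    by_cases hf0ne : f0 = 0
    · exfalso
      have hUf0 : μ • f1 = 0 := by rw [← hU, hf0ne, map_zero]
      by_cases hmu : μ = 0
      · have hDf1 : mcD (2*k+1) f1 = 0 := by rw [hD, hf0ne, smul_zero]
        have hglvl : mcLvl k (mcC (2*k+1) f1) := by
          intro A hA
          show f1 Aᶜ = 0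
          apply hlvl1
          have h1 : A.card ≤ 2*k+1 := by simpa using Finset.card_le_univ A
          rw [Finset.card_compl, Fintype.card_fin]
          omega
        have hTg : mcT (2*k+1) (mcC (2*k+1) f1) = (0:ℝ) • (mcC (2*k+1) f1) := by
          show mcD (2*k+1) (mcU (2*k+1) (mcC (2*k+1) f1)) = _
          rw [mcUC, hDf1, map_zero, map_zero, zero_smul]
        by_cases hgne : mcC (2*k+1) f1 = 0
        · have hf1z : f1 = 0 := by
            funext Y
            calc f1 Y = mcC (2*k+1) f1 Yᶜ := by show f1 Y = f1 Yᶜᶜ; rw [compl_compl]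
            _ = 0 := by rw [hgne]; rfl
          apply hvne
          funext B
          rw [hvext B, hf0ne, hf1z]
          simp
        · obtain ⟨t, ht, he⟩ := mc_spec k (mcC (2*k+1) f1) hglvl hgne 0 hTg
          have htr : (t:ℝ) ≤ k := by exact_mod_cast ht
          nlinarith [he]
      · have hf1z : f1 = 0 := by
          rcases smul_eq_zero.mp hUf0 with hcc | hcc
          · exact absurd hcc hmu
          · exact hcc
        apply hvne
        funext B
        rw [hvext B, hf0ne, hf1z]
        simp
    · obtain ⟨t, ht, he⟩ := mc_spec k f0 hlvl0 hf0ne (μ*μ) hT0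
      have hcast : (((k:ℤ) + 1 - t : ℤ) : ℝ) = (k:ℝ) + 1 - t := by push_cast; ring
      have hfact : (μ - ((k:ℤ) + 1 - t : ℤ)) * (μ + ((k:ℤ) + 1 - t : ℤ)) = 0 := by
        rw [hcast]
        linear_combination he
      rcases mul_eq_zero.mp hfact with hcc | hcc
      · refine ⟨(k:ℤ) + 1 - t, ?_, ?_, by linarith [sub_eq_zero.mp hcc]⟩
        · rw [abs_of_pos (by omega)]; omega
        · rw [abs_of_pos (by omega)]; omega
      · refine ⟨-((k:ℤ) + 1 - t), ?_, ?_, ?_⟩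
        · rw [abs_neg, abs_of_pos (by omega)]; omega
        · rw [abs_neg, abs_of_pos (by omega)]; omega
        · push_cast
          push_cast at hcc
          linarith
/-- Every eigenvalue of the adjacency matrix of the middle-cube `M_n` (`n = 2k+1`) is an
integer `i` with `1 ≤ |i| ≤ k+1`; in particular `0` is not an eigenvalue, so the
adjacency matrix is nonsingular. -/
theorem middle_cube_eigenvalues_integral (k : ℕ) (hk : 1 ≤ k) :
    (∀ μ : ℝ, Module.End.HasEigenvalue (Matrix.toLin' (midAdj (2 * k + 1) k)) μ →
      ∃ i : ℤ, 1 ≤ |i| ∧ |i| ≤ (k : ℤ) + 1 ∧ μ = (i : ℝ)) ∧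
    ¬ Module.End.HasEigenvalue (Matrix.toLin' (midAdj (2 * k + 1) k)) 0 ∧
    (midAdj (2 * k + 1) k).det ≠ 0 := by
  have main := mid_eig_char k
  have hzero : ¬ Module.End.HasEigenvalue (Matrix.toLin' (midAdj (2 * k + 1) k)) 0 := by
    intro h
    obtain ⟨i, hi1, -, hi3⟩ := main 0 h
    rw [eq_comm, Int.cast_eq_zero] at hi3
    rw [hi3] at hi1
    simp at hi1
  refine ⟨main, hzero, ?_⟩
  intro hdet
  obtain ⟨v, hv0, hmv⟩ := Matrix.exists_mulVec_eq_zero_iff.mpr hdet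
  exact hzero (Module.End.hasEigenvalue_of_hasEigenvector
    ⟨Module.End.mem_eigenspace_iff.mpr (by rw [Matrix.toLin'_apply, hmv, zero_smul]), hv0⟩)
end

section
/- Let A ⊆ S. Then ∑_{i ∈ S∖A} ∑_{R ⊆ A, |R| = r−1} g(R ∪ {i}) = −r · f(A). -/
open Finset

/-- Let `S = {1,…,n}` (modeled as `Fin n`), `1 ≤ r ≤ n`, and let `g` assign a real
number to each `r`-subset of `S` such that for every `(r−1)`-subset `R` of `S`,
`∑_{i ∈ S∖R} g(R ∪ {i}) = 0`. With `f(A) = ∑_{B ⊆ A, |B| = r} g(B)`: for every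
`A ⊆ S`, `∑_{i ∈ S∖A} ∑_{R ⊆ A, |R| = r−1} g(R ∪ {i}) = −r·f(A)`. -/
theorem sum_outside (n r : ℕ) (hr : 1 ≤ r) (hrn : r ≤ n) (g : Finset (Fin n) → ℝ)
    (hg : ∀ R : Finset (Fin n), R.card = r - 1 → ∑ i ∈ Rᶜ, g (insert i R) = 0)
    (A : Finset (Fin n)) :
    (∑ i ∈ Aᶜ, ∑ R ∈ A.powersetCard (r - 1), g (insert i R)) =
      -(r : ℝ) * ∑ B ∈ A.powersetCard r, g B := by
  rw [Finset.sum_comm]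
  have h1 : ∀ R ∈ A.powersetCard (r-1),
      ∑ i ∈ Aᶜ, g (insert i R) = -∑ i ∈ A \ R, g (insert i R) := by
    intro R hR
    rw [Finset.mem_powersetCard] at hR
    have hRc : Rᶜ = Aᶜ ∪ (A \ R) := by
      ext x
      simp only [Finset.mem_compl, Finset.mem_union, Finset.mem_sdiff]
      constructor
      · intro hx
        by_cases hxA : x ∈ A
        · exact Or.inr ⟨hxA, hx⟩
        · exact Or.inl hxA
      · rintro (h | ⟨_, h⟩) hxR
        · exact h (hR.1 hxR)
        · exact h hxR
    have hd : Disjoint Aᶜ (A \ R) := by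
      rw [Finset.disjoint_left]
      intro x hx hx2
      exact (Finset.mem_compl.mp hx) (Finset.mem_sdiff.mp hx2).1
    have h0 := hg R hR.2
    rw [hRc, Finset.sum_union hd] at h0
    linarith
  rw [Finset.sum_congr rfl h1, Finset.sum_neg_distrib, neg_mul, neg_inj]
  have key : ∑ R ∈ A.powersetCard (r-1), ∑ i ∈ A \ R, g (insert i R)
      = ∑ B ∈ A.powersetCard r, ∑ _i ∈ B, g B := by
    rw [Finset.sum_sigma', Finset.sum_sigma']
    apply Finset.sum_nbij' (fun p => (⟨insert p.2 p.1, p.2⟩ : Σ _ : Finset (Fin n), Fin n))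
      (fun p => (⟨p.1.erase p.2, p.2⟩ : Σ _ : Finset (Fin n), Fin n))
    · rintro ⟨R, i⟩ hp
      simp only [Finset.mem_sigma, Finset.mem_powersetCard, Finset.mem_sdiff] at hp ⊢
      obtain ⟨⟨hRA, hRcard⟩, hiA, hiR⟩ := hp
      refine ⟨⟨Finset.insert_subset hiA hRA, ?_⟩, Finset.mem_insert_self _ _⟩
      rw [Finset.card_insert_of_notMem hiR, hRcard]
      omega
    · rintro ⟨B, i⟩ hp
      simp only [Finset.mem_sigma, Finset.mem_powersetCard, Finset.mem_sdiff] at hp ⊢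
      obtain ⟨⟨hBA, hBcard⟩, hiB⟩ := hp
      refine ⟨⟨(Finset.erase_subset _ _).trans hBA, ?_⟩, hBA hiB, Finset.notMem_erase _ _⟩
      rw [Finset.card_erase_of_mem hiB, hBcard]
    · rintro ⟨R, i⟩ hp
      simp only [Finset.mem_sigma, Finset.mem_powersetCard, Finset.mem_sdiff] at hp
      simp [Finset.erase_insert hp.2.2]
    · rintro ⟨B, i⟩ hp
      simp only [Finset.mem_sigma, Finset.mem_powersetCard] at hp
      simp [Finset.insert_erase hp.2]
    · rintro ⟨R, i⟩ hp
      simp only [Finset.mem_sigma, Finset.mem_powersetCard] at hp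
      simp [Finset.insert_erase]
  rw [key]
  rw [Finset.sum_congr rfl (fun B hB => Finset.sum_const (g B))]
  rw [Finset.mul_sum]
  apply Finset.sum_congr rfl
  intro B hB
  rw [(Finset.mem_powersetCard.mp hB).2]
  simp [mul_comm]
end

section
/- Let n = 2k+1 with k ≥ 1 and let 1 ≤ r ≤ k. For every subset A of S with |A| = k, ∑_{i ∈ S∖A} f(A ∪ {i}) = (k+1−r) · f(A). -/
open Finset

/-!
Write `f A = ∑_{B ⊆ A, |B| = r} g B`. For `i ∉ A`, the `r`-subsets of `A ∪ {i}` are those of `A`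
together with the sets `B ∪ {i}`, `B` an `(r-1)`-subset of `A`. The constraint at `B` turns
`∑_{i ∉ A} g (B ∪ {i})` into `-∑_{i ∈ A \ B} g (B ∪ {i})`, and summing the latter over all `B`
counts every `r`-subset of `A` once per element, i.e. gives `r · f A`. Hence the neighbour sum is
`(|Aᶜ| - r) · f A`, and `|Aᶜ| = k + 1` when `n = 2k + 1` and `|A| = k`.
-/

namespace Finset

variable {α M : Type*} [DecidableEq α]

section AddCommMonoid

variable [AddCommMonoid M]

theorem sum_powersetCard_succ_insert {A : Finset α} {i : α} (hi : i ∉ A) (r : ℕ)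
    (g : Finset α → M) :
    ∑ B ∈ (insert i A).powersetCard (r + 1), g B =
      ∑ B ∈ A.powersetCard (r + 1), g B + ∑ B ∈ A.powersetCard r, g (insert i B) := by
  have hinj : Set.InjOn (insert i) (A.powersetCard r : Set (Finset α)) := fun B hB C hC hBC => by
    have hiB : i ∉ B := fun h => hi ((mem_powersetCard.mp hB).1 h)
    have hiC : i ∉ C := fun h => hi ((mem_powersetCard.mp hC).1 h)
    rw [← erase_insert hiB, ← erase_insert hiC, hBC]
  have hdisj : Disjoint (A.powersetCard (r + 1)) ((A.powersetCard r).image (insert i)) := by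
    refine disjoint_left.mpr fun C hC hC' => ?_
    obtain ⟨B, -, rfl⟩ := mem_image.mp hC'
    exact hi ((mem_powersetCard.mp hC).1 (mem_insert_self i B))
  rw [powersetCard_succ_insert hi, sum_union hdisj, sum_image hinj]

/-- Double counting of the pairs `(B, i)` with `B ⊆ A`, `|B| = r`, `i ∈ A \ B`,
through `C = B ∪ {i}`. -/
theorem sum_powersetCard_sum_sdiff_insert (A : Finset α) (r : ℕ) (g : Finset α → M) :
    ∑ B ∈ A.powersetCard r, ∑ i ∈ A \ B, g (insert i B) =
      (r + 1) • ∑ C ∈ A.powersetCard (r + 1), g C := by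
  have hcount : (r + 1) • ∑ C ∈ A.powersetCard (r + 1), g C =
      ∑ C ∈ A.powersetCard (r + 1), ∑ _i ∈ C, g C := by
    rw [smul_sum]
    refine sum_congr rfl fun C hC => ?_
    rw [sum_const, (mem_powersetCard.mp hC).2]
  rw [hcount, sum_sigma', sum_sigma']
  refine sum_nbij' (fun p => ⟨insert p.2 p.1, p.2⟩) (fun p => ⟨p.1.erase p.2, p.2⟩)
    ?_ ?_ ?_ ?_ ?_
  · rintro ⟨B, i⟩ hp
    simp only [mem_sigma, mem_powersetCard, mem_sdiff] at hp ⊢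
    obtain ⟨⟨hBA, hBcard⟩, hiA, hiB⟩ := hp
    exact ⟨⟨insert_subset hiA hBA, by rw [card_insert_of_notMem hiB, hBcard]⟩,
      mem_insert_self _ _⟩
  · rintro ⟨C, i⟩ hp
    simp only [mem_sigma, mem_powersetCard, mem_sdiff] at hp ⊢
    obtain ⟨⟨hCA, hCcard⟩, hiC⟩ := hp
    exact ⟨⟨(erase_subset _ _).trans hCA, by rw [card_erase_of_mem hiC, hCcard]; rfl⟩,
      hCA hiC, notMem_erase _ _⟩
  · rintro ⟨B, i⟩ hp
    simp only [mem_sigma, mem_powersetCard, mem_sdiff] at hp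
    simp [erase_insert hp.2.2]
  · rintro ⟨C, i⟩ hp
    simp only [mem_sigma, mem_powersetCard] at hp
    simp [insert_erase hp.2]
  · exact fun _ _ => rfl

end AddCommMonoid

variable [Fintype α] [AddCommGroup M]

theorem sum_compl_add_sum_sdiff_of_subset {A B : Finset α} (hBA : B ⊆ A) (h : α → M) :
    ∑ i ∈ Aᶜ, h i + ∑ i ∈ A \ B, h i = ∑ i ∈ Bᶜ, h i := by
  rw [← compl_sdiff_compl, add_comm, sum_sdiff (compl_subset_compl.mpr hBA)]

theorem sum_compl_sum_powersetCard_insert_add {r : ℕ} {g : Finset α → M}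
    (hg : ∀ R : Finset α, R.card = r → ∑ i ∈ Rᶜ, g (insert i R) = 0) (A : Finset α) :
    ∑ i ∈ Aᶜ, ∑ B ∈ (insert i A).powersetCard (r + 1), g B +
        (r + 1) • ∑ B ∈ A.powersetCard (r + 1), g B =
      Aᶜ.card • ∑ B ∈ A.powersetCard (r + 1), g B := by
  have houter : ∀ B ∈ A.powersetCard r,
      ∑ i ∈ Aᶜ, g (insert i B) + ∑ i ∈ A \ B, g (insert i B) = 0 := fun B hB => by
    obtain ⟨hBA, hBcard⟩ := mem_powersetCard.mp hB
    rw [sum_compl_add_sum_sdiff_of_subset hBA, hg B hBcard]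
  rw [sum_congr rfl fun i hi => sum_powersetCard_succ_insert (mem_compl.mp hi) r g,
    sum_add_distrib, sum_const, ← sum_powersetCard_sum_sdiff_insert, sum_comm, add_assoc,
    ← sum_add_distrib, sum_eq_zero houter, add_zero]

end Finset

theorem sum_neighbors_lower_general (k r : ℕ) (hr : 1 ≤ r)
    (g : Finset (Fin (2 * k + 1)) → ℝ)
    (hg : ∀ R : Finset (Fin (2 * k + 1)), R.card = r - 1 →
      ∑ i ∈ Rᶜ, g (insert i R) = 0)
    (A : Finset (Fin (2 * k + 1))) (hA : A.card = k) :
    (∑ i ∈ Aᶜ, ∑ B ∈ (insert i A).powersetCard r, g B) =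
      ((k : ℝ) + 1 - r) * ∑ B ∈ A.powersetCard r, g B := by
  obtain ⟨r, rfl⟩ : ∃ r', r = r' + 1 := ⟨r - 1, (Nat.succ_pred_eq_of_pos hr).symm⟩
  have hcompl : Aᶜ.card = k + 1 := by
    rw [card_compl, hA, Fintype.card_fin]
    omega
  have key := sum_compl_sum_powersetCard_insert_add hg A
  rw [hcompl, nsmul_eq_mul, nsmul_eq_mul] at key
  push_cast at key ⊢
  linarith

/-- Let `n = 2k+1` with `k ≥ 1`, `S = {1,…,n}` (modeled as `Fin n`), `1 ≤ r ≤ k`, and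
let `g` assign a real number to each `r`-subset of `S` such that for every
`(r−1)`-subset `R` of `S`, `∑_{i ∈ S∖R} g(R ∪ {i}) = 0`. With
`f(A) = ∑_{B ⊆ A, |B| = r} g(B)`: for every `A ⊆ S` with `|A| = k`,
`∑_{i ∈ S∖A} f(A ∪ {i}) = (k+1−r)·f(A)`. -/
theorem sum_neighbors_lower (k r : ℕ) (hk : 1 ≤ k) (hr : 1 ≤ r) (hrk : r ≤ k)
    (g : Finset (Fin (2 * k + 1)) → ℝ)
    (hg : ∀ R : Finset (Fin (2 * k + 1)), R.card = r - 1 →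
      ∑ i ∈ Rᶜ, g (insert i R) = 0)
    (A : Finset (Fin (2 * k + 1))) (hA : A.card = k) :
    (∑ i ∈ Aᶜ, ∑ B ∈ (insert i A).powersetCard r, g B) =
      ((k : ℝ) + 1 - r) * ∑ B ∈ A.powersetCard r, g B :=
  sum_neighbors_lower_general k r hr g hg A hA
end

section
/- Let n = 2k+1 with k ≥ 1 and let 1 ≤ r ≤ k. Consider the linear map Φ sending each assignment g of real numbers to the r-subsets of S satisfying the constraints to the vector (f(A))_A indexed by the subsets A of S with |A| = k or |A| = k+1, where f(A) = ∑_{B ⊆ A, |B| = r} g(B). Then the image of Φ is a vector space of dimension C(n, r) − C(n, r−1); equivalently, Φ is injective on the constraint space. -/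
open Finset

/-- The space of assignments `g` of real numbers to the `r`-subsets of `S = {1,…,n}`
satisfying, for every `(r−1)`-subset `R` of `S`, `∑_{i ∈ S∖R} g(R ∪ {i}) = 0`. -/
def constraintSpace (n r : ℕ) (hr : 1 ≤ r) :
    Submodule ℝ ({A : Finset (Fin n) // A.card = r} → ℝ) where
  carrier := {g | ∀ R : Finset (Fin n), ∀ hR : R.card = r - 1,
    ∑ i ∈ Rᶜ.attach, g ⟨insert i.1 R, by
      have hi : (i : Fin n) ∉ R := Finset.mem_compl.mp i.2
      rw [Finset.card_insert_of_notMem hi, hR]; omega⟩ = 0}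
  add_mem' := by
    intro a b ha hb R hR
    simpa [Finset.sum_add_distrib] using by rw [ha R hR, hb R hR, add_zero]
  zero_mem' := by intro R hR; simp
  smul_mem' := by
    intro c a ha R hR
    simpa [← Finset.mul_sum] using Or.inr (ha R hR)

/-- The linear map `Φ` sending an assignment `g` on the `r`-subsets of `S` to the
vector `(f(A))_A` indexed by the vertices of the middle-cube, where
`f(A) = ∑_{B ⊆ A, |B| = r} g(B)`. -/
def Phi (n k r : ℕ) :
    ({A : Finset (Fin n) // A.card = r} → ℝ) →ₗ[ℝ] (MidVert n k → ℝ) where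
  toFun g := fun A => ∑ B ∈ (A.1.powersetCard r).attach,
    g ⟨B.1, (Finset.mem_powersetCard.mp B.2).2⟩
  map_add' := by intro a b; funext A; simp [Finset.sum_add_distrib]
  map_smul' := by intro c a; funext A; simp [Finset.mul_sum]

/-!
Write `D f (s) = ∑_{i ∉ s} f (s ∪ {i})` and `U f (s) = ∑_{i ∈ s} f (s ∖ {i})` for functions on
subsets of an `n`-set; the constraint space is the kernel of `D` from level `r` to level `r - 1`.
`D` and `U` are adjoint for the standard inner products on the levels, and
`DU - UD = n - 2a` on level `a`. Hence `⟨DU f, f⟩ = |D f|² + (n - 2a)|f|²`, so `DU` is injective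
on level `a` when `2a < n`, `D` is onto level `r - 1`, and its kernel has dimension
`C(n, r) - C(n, r - 1)`.

If `D g = 0`, the subset sums `F (A) = ∑_{B ⊆ A, |B| = r} g (B)` satisfy
`D F (A) = (n - |A| - r) F (A)`. For `r ≤ |A| < k` the factor is nonzero, so `F = 0` on the
`k`-sets forces `F = 0` on every level down to `r`, where `F = g`: `Φ` is injective on the
constraint space.
-/

namespace MiddleLevels

variable {α M R K : Type*}

section Extension

variable [CommRing R]

def extendLevel (r : ℕ) : ({s : Finset α // #s = r} → R) →ₗ[R] (Finset α → R) where
  toFun g s := if h : #s = r then g ⟨s, h⟩ else 0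
  map_add' g g' := by ext s; split_ifs <;> simp [*]
  map_smul' c g := by ext s; split_ifs <;> simp [*]

theorem extendLevel_apply_of_card {r : ℕ} (g : {s : Finset α // #s = r} → R) {s : Finset α}
    (hs : #s = r) : extendLevel r g s = g ⟨s, hs⟩ :=
  dif_pos hs

theorem extendLevel_funLeft_apply {r : ℕ} (f : Finset α → R) {s : Finset α} (hs : #s = r) :
    extendLevel r (LinearMap.funLeft R R Subtype.val f) s = f s :=
  dif_pos hs

end Extension

theorem finrank_level [Fintype α] [Field K] (r : ℕ) :
    Module.finrank K ({s : Finset α // #s = r} → K) = (Fintype.card α).choose r := by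
  rw [Module.finrank_fintype_fun_eq_card, Fintype.card_finset_len]

section

variable [DecidableEq α]

section AddCommMonoid

variable [AddCommMonoid M]

theorem sum_powersetCard_sum_sdiff_insert (s : Finset α) (j : ℕ)
    (H : Finset α → α → M) :
    ∑ t ∈ s.powersetCard j, ∑ i ∈ s \ t, H (insert i t) i
      = ∑ u ∈ s.powersetCard (j + 1), ∑ i ∈ u, H u i := by
  rw [sum_sigma', sum_sigma']
  refine sum_nbij' (fun x => ⟨insert x.2 x.1, x.2⟩) (fun y => ⟨y.1.erase y.2, y.2⟩)
    ?_ ?_ ?_ ?_ fun _ _ => rfl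
  · rintro ⟨t, i⟩ hx
    simp only [mem_sigma, mem_powersetCard, mem_sdiff] at hx ⊢
    obtain ⟨⟨hts, rfl⟩, his, hit⟩ := hx
    exact ⟨⟨insert_subset his hts, card_insert_of_notMem hit⟩, mem_insert_self _ _⟩
  · rintro ⟨u, i⟩ hy
    simp only [mem_sigma, mem_powersetCard, mem_sdiff] at hy ⊢
    obtain ⟨⟨hus, hu⟩, hiu⟩ := hy
    refine ⟨⟨(erase_subset _ _).trans hus, ?_⟩, hus hiu, notMem_erase _ _⟩
    rw [card_erase_of_mem hiu, hu, Nat.add_sub_cancel]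
  · rintro ⟨t, i⟩ hx
    simp only [mem_sigma, mem_sdiff] at hx
    simp [erase_insert hx.2.2]
  · rintro ⟨u, i⟩ hy
    simp only [mem_sigma] at hy
    simp [insert_erase hy.2]

def sumOfSubsets (j : ℕ) (f : Finset α → M) (s : Finset α) : M :=
  ∑ t ∈ s.powersetCard j, f t

theorem sumOfSubsets_insert {a : ℕ} {i : α} {s : Finset α} (g : Finset α → M) (his : i ∉ s) :
    sumOfSubsets (a + 1) g (insert i s)
      = sumOfSubsets (a + 1) g s + ∑ t ∈ s.powersetCard a, g (insert i t) := by
  rw [sumOfSubsets, powersetCard_succ_insert his, sum_union, sum_image, sumOfSubsets]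
  · intro t ht t' ht' htt'
    have hit : i ∉ t := fun h => his ((mem_powersetCard.mp ht).1 h)
    have hit' : i ∉ t' := fun h => his ((mem_powersetCard.mp ht').1 h)
    rw [← erase_insert hit, ← erase_insert hit', htt']
  · refine disjoint_left.2 fun u hu hu' => ?_
    obtain ⟨t, _, rfl⟩ := mem_image.mp hu'
    exact his ((mem_powersetCard.mp hu).1 (mem_insert_self i t))

end AddCommMonoid

variable [CommRing R]

def up : (Finset α → R) →ₗ[R] (Finset α → R) where
  toFun f s := ∑ i ∈ s, f (s.erase i)
  map_add' f g := by ext s; simp only [Pi.add_apply, sum_add_distrib]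
  map_smul' c f := by ext s; simp only [Pi.smul_apply, smul_eq_mul, RingHom.id_apply, mul_sum]

theorem up_apply (f : Finset α → R) (s : Finset α) : up f s = ∑ i ∈ s, f (s.erase i) := rfl

end

variable [Fintype α] [DecidableEq α]

section CommRing

variable [CommRing R]

def down : (Finset α → R) →ₗ[R] (Finset α → R) where
  toFun f s := ∑ i ∈ sᶜ, f (insert i s)
  map_add' f g := by ext s; simp only [Pi.add_apply, sum_add_distrib]
  map_smul' c f := by ext s; simp only [Pi.smul_apply, smul_eq_mul, RingHom.id_apply, mul_sum]

theorem down_apply (f : Finset α → R) (s : Finset α) :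
    down f s = ∑ i ∈ sᶜ, f (insert i s) := rfl

theorem sum_up_mul_eq_sum_mul_down (a : ℕ) (f g : Finset α → R) :
    ∑ s ∈ (univ : Finset α).powersetCard (a + 1), up f s * g s
      = ∑ t ∈ (univ : Finset α).powersetCard a, f t * down g t := by
  calc ∑ s ∈ (univ : Finset α).powersetCard (a + 1), up f s * g s
      = ∑ s ∈ (univ : Finset α).powersetCard (a + 1), ∑ i ∈ s, f (s.erase i) * g s := by
        simp only [up_apply, sum_mul]
    _ = ∑ t ∈ (univ : Finset α).powersetCard a, ∑ i ∈ univ \ t,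
          f ((insert i t).erase i) * g (insert i t) :=
        (sum_powersetCard_sum_sdiff_insert _ a fun s i => f (s.erase i) * g s).symm
    _ = ∑ t ∈ (univ : Finset α).powersetCard a, f t * down g t := by
        refine sum_congr rfl fun t _ => ?_
        rw [down_apply, mul_sum, ← compl_eq_univ_sdiff]
        exact sum_congr rfl fun i hi => by rw [erase_insert (mem_compl.mp hi)]

theorem down_up_apply (f : Finset α → R) (s : Finset α) :
    down (up f) s = up (down f) s + ((Fintype.card α : R) - 2 * #s) * f s := by
  have hdu : down (up f) s = #sᶜ * f s + ∑ i ∈ sᶜ, ∑ l ∈ s, f (insert i (s.erase l)) := by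
    have (i) (hi : i ∈ sᶜ) : up f (insert i s) = f s + ∑ l ∈ s, f (insert i (s.erase l)) := by
      have his : i ∉ s := mem_compl.mp hi
      rw [up_apply, sum_insert his, erase_insert his]
      exact congrArg _ (sum_congr rfl fun l hl =>
        congrArg f (erase_insert_of_ne fun h => his (h ▸ hl)))
    rw [down_apply, sum_congr rfl this, sum_add_distrib, sum_const, nsmul_eq_mul]
  have hud : up (down f) s = #s * f s + ∑ l ∈ s, ∑ i ∈ sᶜ, f (insert i (s.erase l)) := by
    have (l) (hl : l ∈ s) : down f (s.erase l) = f s + ∑ i ∈ sᶜ, f (insert i (s.erase l)) := by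
      rw [down_apply, compl_erase, sum_insert (by simp [hl]), insert_erase hl]
    rw [up_apply, sum_congr rfl this, sum_add_distrib, sum_const, nsmul_eq_mul]
  rw [hdu, hud, sum_comm, card_compl, Nat.cast_sub (card_le_univ s)]
  ring

theorem sum_compl_insert_of_down_eq_zero {g : Finset α → R} {s t : Finset α} (hts : t ⊆ s)
    (hg : down g t = 0) :
    ∑ i ∈ sᶜ, g (insert i t) = -∑ i ∈ s \ t, g (insert i t) := by
  rw [down_apply, ← sum_sdiff (compl_subset_compl.2 hts), compl_sdiff_compl] at hg
  exact eq_neg_of_add_eq_zero_right hg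

theorem down_sumOfSubsets_apply {a : ℕ} {g : Finset α → R}
    (hg : ∀ t : Finset α, #t = a → down g t = 0) (s : Finset α) :
    down (sumOfSubsets (a + 1) g) s
      = ((Fintype.card α : R) - #s - (a + 1)) * sumOfSubsets (a + 1) g s := by
  have hcount : ∑ u ∈ s.powersetCard (a + 1), ∑ _i ∈ u, g u
      = ((a : R) + 1) * sumOfSubsets (a + 1) g s := by
    rw [sumOfSubsets, mul_sum]
    refine sum_congr rfl fun u hu => ?_
    rw [sum_const, nsmul_eq_mul, (mem_powersetCard.mp hu).2]
    push_cast; ring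
  rw [down_apply, sum_congr rfl fun i hi => sumOfSubsets_insert g (mem_compl.mp hi),
    sum_add_distrib, sum_const, nsmul_eq_mul, sum_comm,
    sum_congr rfl fun t ht => sum_compl_insert_of_down_eq_zero (mem_powersetCard.mp ht).1
      (hg t (mem_powersetCard.mp ht).2),
    sum_neg_distrib, sum_powersetCard_sum_sdiff_insert s a fun u _ => g u, hcount,
    card_compl, Nat.cast_sub (card_le_univ s)]
  ring

theorem eq_zero_of_sumOfSubsets_eq_zero [IsDomain R] [CharZero R] {a m : ℕ} {g : Finset α → R}
    (hg : ∀ t : Finset α, #t = a → down g t = 0) (ham : a + 1 ≤ m)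
    (hmα : m + a + 1 ≤ Fintype.card α) (hm : ∀ s : Finset α, #s = m → sumOfSubsets (a + 1) g s = 0)
    (s : Finset α) (hs : #s = a + 1) : g s = 0 := by
  induction m with
  | zero => omega
  | succ m ih =>
    rcases Nat.eq_or_lt_of_le ham with hm' | hm'
    · rw [← sum_singleton g s, ← powersetCard_self, hs]
      exact hm s (hs.trans hm')
    refine ih (by omega) (by omega) (fun t ht => ?_)
    have hdown : down (sumOfSubsets (a + 1) g) t = 0 :=
      sum_eq_zero fun i hi => hm _ (by rw [card_insert_of_notMem (mem_compl.1 hi), ht])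
    have hcoef : (Fintype.card α : R) - #t - (a + 1) ≠ 0 := by
      have hpos : ((Fintype.card α - m - (a + 1) : ℕ) : R) ≠ 0 := Nat.cast_ne_zero.2 (by omega)
      rwa [Nat.cast_sub (by omega), Nat.cast_sub (by omega), Nat.cast_add_one, ← ht] at hpos
    rw [down_sumOfSubsets_apply hg] at hdown
    exact (mul_eq_zero.1 hdown).resolve_left hcoef

variable (R) in
def levelDown (a : ℕ) :
    ({s : Finset α // #s = a + 1} → R) →ₗ[R] ({s : Finset α // #s = a} → R) :=
  LinearMap.funLeft R R Subtype.val ∘ₗ down ∘ₗ extendLevel (a + 1)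

variable (R) in
def levelUp (a : ℕ) :
    ({s : Finset α // #s = a} → R) →ₗ[R] ({s : Finset α // #s = a + 1} → R) :=
  LinearMap.funLeft R R Subtype.val ∘ₗ up ∘ₗ extendLevel a

theorem levelDown_apply {a : ℕ} (g : {s : Finset α // #s = a + 1} → R)
    (t : {s : Finset α // #s = a}) :
    levelDown R a g t = down (extendLevel (a + 1) g) t.1 := rfl

end CommRing

section LinearOrderedField

variable [Field K] [LinearOrder K] [IsStrictOrderedRing K]

theorem sum_mul_up_down_nonneg (a : ℕ) (f : Finset α → K) :
    0 ≤ ∑ s ∈ (univ : Finset α).powersetCard a, f s * up (down f) s := by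
  rcases a with _ | a
  · exact (sum_eq_zero fun s hs => by
      rw [card_eq_zero.1 (mem_powersetCard_univ.1 hs), up_apply, sum_empty, mul_zero]).ge
  · calc (0 : K) ≤ ∑ t ∈ (univ : Finset α).powersetCard a, down f t * down f t :=
          sum_nonneg fun _ _ => mul_self_nonneg _
      _ = ∑ s ∈ (univ : Finset α).powersetCard (a + 1), f s * up (down f) s := by
          rw [← sum_up_mul_eq_sum_mul_down]
          exact sum_congr rfl fun _ _ => mul_comm _ _

theorem eq_zero_of_down_up_eq_zero {a : ℕ} (ha : 2 * a < Fintype.card α) {f : Finset α → K}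
    (hf : ∀ s : Finset α, #s = a → down (up f) s = 0) (s : Finset α) (hs : #s = a) : f s = 0 := by
  have hpair : 0 = ∑ s ∈ (univ : Finset α).powersetCard a, f s * up (down f) s
      + ((Fintype.card α : K) - 2 * a) * ∑ s ∈ (univ : Finset α).powersetCard a, f s * f s := by
    calc (0 : K) = ∑ s ∈ (univ : Finset α).powersetCard a, f s * down (up f) s :=
          (sum_eq_zero fun s hs => by rw [hf s (mem_powersetCard_univ.1 hs), mul_zero]).symm
      _ = _ := by
          rw [mul_sum, ← sum_add_distrib]
          refine sum_congr rfl fun s hs => ?_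
          rw [down_up_apply, mem_powersetCard_univ.1 hs]
          ring
  have hcoef : 0 < (Fintype.card α : K) - 2 * a := by
    rw [sub_pos]; exact_mod_cast ha
  have hsq : ∑ s ∈ (univ : Finset α).powersetCard a, f s * f s = 0 := by
    nlinarith [sum_mul_up_down_nonneg a f,
      sum_nonneg fun s (_ : s ∈ (univ : Finset α).powersetCard a) => mul_self_nonneg (f s)]
  exact (sum_mul_self_eq_zero_iff _ f).1 hsq s (mem_powersetCard_univ.2 hs)

theorem levelDown_comp_levelUp_injective {a : ℕ} (ha : 2 * a < Fintype.card α) :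
    Function.Injective (levelDown K a ∘ₗ levelUp K (α := α) a) := by
  rw [← LinearMap.ker_eq_bot, LinearMap.ker_eq_bot']
  intro f hf
  have hdu (t : Finset α) (ht : #t = a) : down (up (extendLevel a f)) t = 0 := by
    have hft := congrFun hf ⟨t, ht⟩
    rw [LinearMap.comp_apply, levelDown_apply, Pi.zero_apply] at hft
    rw [← hft]
    exact sum_congr rfl fun i hi => (extendLevel_funLeft_apply _
      (by rw [card_insert_of_notMem (mem_compl.1 hi), ht])).symm
  ext ⟨t, ht⟩
  rw [← extendLevel_apply_of_card f ht]
  exact eq_zero_of_down_up_eq_zero ha hdu t ht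

theorem levelDown_surjective {a : ℕ} (ha : 2 * a < Fintype.card α) :
    Function.Surjective (levelDown K (α := α) a) :=
  fun g => ⟨_, (LinearMap.injective_iff_surjective.1
    (levelDown_comp_levelUp_injective ha) g).choose_spec⟩

theorem finrank_ker_levelDown {a : ℕ} (ha : 2 * a < Fintype.card α) :
    Module.finrank K (LinearMap.ker (levelDown K (α := α) a))
      = (Fintype.card α).choose (a + 1) - (Fintype.card α).choose a := by
  have := (levelDown K (α := α) a).finrank_range_add_finrank_ker
  rw [LinearMap.range_eq_top.2 (levelDown_surjective ha), finrank_top, finrank_level,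
    finrank_level] at this
  omega

end LinearOrderedField

end MiddleLevels

open MiddleLevels

theorem constraintSpace_eq_ker_levelDown (n a : ℕ) (hr : 1 ≤ a + 1) :
    constraintSpace n (a + 1) hr = LinearMap.ker (levelDown ℝ (α := Fin n) a) := by
  ext g
  simp only [LinearMap.mem_ker, funext_iff, Subtype.forall, Pi.zero_apply, levelDown_apply,
    down_apply]
  refine forall₂_congr fun t ht => Iff.of_eq (congrArg (· = 0) ?_)
  rw [← sum_attach tᶜ fun i => extendLevel (a + 1) g (insert i t)]
  exact sum_congr rfl fun i _ => (extendLevel_apply_of_card _ _).symm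

theorem Phi_apply (n k r : ℕ) (g : {A : Finset (Fin n) // A.card = r} → ℝ) (A : MidVert n k) :
    Phi n k r g A = sumOfSubsets r (extendLevel r g) A.1 := by
  rw [sumOfSubsets, ← sum_attach]
  exact sum_congr rfl fun B _ => (extendLevel_apply_of_card _ _).symm

theorem Phi_domRestrict_injective (k r : ℕ) (hr : 1 ≤ r) (hrk : r ≤ k) :
    Function.Injective ((Phi (2 * k + 1) k r).domRestrict (constraintSpace (2 * k + 1) r hr)) := by
  obtain ⟨a, rfl⟩ : ∃ a, r = a + 1 := ⟨r - 1, by omega⟩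
  rw [← LinearMap.ker_eq_bot, LinearMap.ker_eq_bot']
  rintro ⟨g, hg⟩ hPhi
  rw [LinearMap.domRestrict_apply] at hPhi
  rw [constraintSpace_eq_ker_levelDown, LinearMap.mem_ker] at hg
  rw [Submodule.mk_eq_zero]
  have hdown (t : Finset (Fin (2 * k + 1))) (ht : #t = a) : down (extendLevel (a + 1) g) t = 0 :=
    congrFun hg ⟨t, ht⟩
  have hsum (s : Finset (Fin (2 * k + 1))) (hs : #s = k) :
      sumOfSubsets (a + 1) (extendLevel (a + 1) g) s = 0 := by
    rw [← Phi_apply _ k _ g ⟨s, Or.inl hs⟩]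
    exact congrFun hPhi _
  ext ⟨s, hs⟩
  rw [← extendLevel_apply_of_card g hs]
  exact eq_zero_of_sumOfSubsets_eq_zero hdown hrk (by rw [Fintype.card_fin]; omega) hsum s hs

theorem Phi_image_finrank_general (k r : ℕ) (hr : 1 ≤ r) (hrk : r ≤ k) :
    Module.finrank ℝ
        (Submodule.map (Phi (2 * k + 1) k r) (constraintSpace (2 * k + 1) r hr)) =
      (2 * k + 1).choose r - (2 * k + 1).choose (r - 1) ∧
    Set.InjOn (Phi (2 * k + 1) k r) (constraintSpace (2 * k + 1) r hr) := by
  have hinj := Phi_domRestrict_injective k r hr hrk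
  refine ⟨?_, Set.injOn_iff_injective.2 hinj⟩
  obtain ⟨a, rfl⟩ : ∃ a, r = a + 1 := ⟨r - 1, by omega⟩
  rw [← LinearMap.range_domRestrict, LinearMap.finrank_range_of_inj hinj,
    constraintSpace_eq_ker_levelDown, finrank_ker_levelDown (by rw [Fintype.card_fin]; omega), Fintype.card_fin,
    Nat.add_sub_cancel]

/-- Let `n = 2k+1` with `k ≥ 1` and `1 ≤ r ≤ k`. The image under `Φ` of the constraint
space is a vector space of dimension `C(n, r) − C(n, r−1)`; equivalently, `Φ` is
injective on the constraint space. -/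
theorem Phi_image_finrank (k r : ℕ) (hk : 1 ≤ k) (hr : 1 ≤ r) (hrk : r ≤ k) :
    Module.finrank ℝ
        (Submodule.map (Phi (2 * k + 1) k r) (constraintSpace (2 * k + 1) r hr)) =
      (2 * k + 1).choose r - (2 * k + 1).choose (r - 1) ∧
    Set.InjOn (Phi (2 * k + 1) k r) (constraintSpace (2 * k + 1) r hr) :=
  Phi_image_finrank_general k r hr hrk
end

section
/- Let n = 2k+1 with k ≥ 1 and let 1 ≤ r ≤ k. The eigenspace of the adjacency matrix of the middle-cube M_n for the eigenvalue k+1−r is exactly the set of vectors (f(A))_A indexed by the vertices A of M_n, where f(A) = ∑_{B ⊆ A, |B| = r} g(B) and g ranges over all assignments of real numbers to the r-subsets of S satisfying: for every (r−1)-subset R of S, ∑_{i ∈ S∖R} g(R ∪ {i}) = 0. In particular this eigenspace has dimension C(n, r) − C(n, r−1). -/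
open Finset

/-!
Write `U` and `D` for the up and down operators on real functions on the subsets of an `N`-set
and `f = subsetSum r g`, i.e. `f A = ∑_{B ⊆ A, |B| = r} g B`. On level `s` one has
`DU - UD = N - 2s`, `U` is adjoint to `D`, and `U f = (|A| - r) f`. If `g` is harmonic
(`D g = 0` on level `r - 1`), induction on `A` with the commutation relation gives
`D f = (N - |A| - r) f`; on the two middle levels of `N = 2k + 1` these two identities say that
`f` is an eigenvector of `M_N` for the eigenvalue `k + 1 - r`. Adjointness and the commutation
relation make `U` injective below the middle level, so `g ↦ f` is injective on functions on
level `r`, and the harmonic ones span an eigenspace of dimension at least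
`C(N, r) - C(N, r - 1)` (for `r = 0`: the constants, eigenvalue `k + 1`).

The middle cube is bipartite, so changing signs on one level exchanges the eigenspaces of `μ`
and `-μ`. The lower bounds for the `2(k + 1)` eigenvalues `±(k + 1 - r)` telescope to
`2 C(N, k)`, the number of vertices, so every bound is attained and every eigenvector for
`k + 1 - r` comes from a harmonic `g`.
-/

namespace MiddleCube

open Module

section Operators

variable {α : Type*}

def subsetSum (r : ℕ) : Module.End ℝ (Finset α → ℝ) where
  toFun g A := ∑ B ∈ A.powersetCard r, g B
  map_add' _ _ := funext fun _ => sum_add_distrib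
  map_smul' _ _ := funext fun _ => (mul_sum ..).symm

theorem subsetSum_apply (r : ℕ) (g : Finset α → ℝ) (A : Finset α) :
    subsetSum r g A = ∑ B ∈ A.powersetCard r, g B := rfl

theorem subsetSum_of_card_lt {r : ℕ} {A : Finset α} (hA : #A < r) (g : Finset α → ℝ) :
    subsetSum r g A = 0 := by
  rw [subsetSum_apply, powersetCard_eq_empty.2 hA, sum_empty]

theorem subsetSum_of_card_eq {r : ℕ} {A : Finset α} (hA : #A = r) (g : Finset α → ℝ) :
    subsetSum r g A = g A := by
  rw [subsetSum_apply, ← hA, powersetCard_self, sum_singleton]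

variable [DecidableEq α]

def up : Module.End ℝ (Finset α → ℝ) where
  toFun g A := ∑ j ∈ A, g (A.erase j)
  map_add' _ _ := funext fun _ => sum_add_distrib
  map_smul' _ _ := funext fun _ => (mul_sum ..).symm

theorem up_apply (g : Finset α → ℝ) (A : Finset α) : up g A = ∑ j ∈ A, g (A.erase j) := rfl

theorem up_subsetSum (r : ℕ) (g : Finset α → ℝ) (A : Finset α) :
    up (subsetSum r g) A = ((#A : ℝ) - r) * subsetSum r g A := by
  simp only [up_apply, subsetSum_apply, mul_sum]
  rw [sum_comm' (t' := A.powersetCard r) (s' := fun B => A \ B) fun j B => by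
    simp only [mem_powersetCard, subset_erase, mem_sdiff]; tauto]
  refine sum_congr rfl fun B hB => ?_
  obtain ⟨hBA, hB⟩ := mem_powersetCard.1 hB
  rw [sum_const, nsmul_eq_mul, cast_card_sdiff hBA, hB]

variable [Fintype α]

def down : Module.End ℝ (Finset α → ℝ) where
  toFun g R := ∑ i ∈ Rᶜ, g (insert i R)
  map_add' _ _ := funext fun _ => sum_add_distrib
  map_smul' _ _ := funext fun _ => (mul_sum ..).symm

theorem down_apply (g : Finset α → ℝ) (R : Finset α) : down g R = ∑ i ∈ Rᶜ, g (insert i R) := rfl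

theorem down_up_apply (g : Finset α → ℝ) (R : Finset α) :
    down (up g) R = up (down g) R + ((Fintype.card α : ℝ) - 2 * #R) * g R := by
  have hdu : down (up g) R = ∑ i ∈ Rᶜ, (g R + ∑ j ∈ R, g (insert i (R.erase j))) := by
    refine sum_congr rfl fun i hi => ?_
    have hiR : i ∉ R := by simpa using hi
    rw [up_apply, sum_insert hiR, erase_insert hiR]
    congr 1
    refine sum_congr rfl fun j hj => ?_
    rw [erase_insert_of_ne (ne_of_mem_of_not_mem hj hiR).symm]
  have hud : up (down g) R = ∑ j ∈ R, (g R + ∑ i ∈ Rᶜ, g (insert i (R.erase j))) := by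
    refine sum_congr rfl fun j hj => ?_
    rw [down_apply, compl_erase, sum_insert (by simpa using hj), insert_erase hj]
  rw [hdu, hud, sum_add_distrib, sum_add_distrib, sum_const, sum_const, sum_comm, nsmul_eq_mul,
    nsmul_eq_mul, card_compl, Nat.cast_sub (card_le_univ R)]
  ring

theorem sum_up_mul (g f : Finset α → ℝ) (t : ℕ) :
    ∑ A with #A = t, up g A * f A = ∑ B with #B + 1 = t, g B * down f B := by
  simp only [up_apply, down_apply, sum_mul, mul_sum]
  rw [sum_comm' (t' := univ) (s' := fun j => {A | #A = t ∧ j ∈ A}) (by simp),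
    sum_comm' (t' := univ) (s' := fun i => {B | #B + 1 = t ∧ i ∉ B}) (by simp)]
  refine sum_congr rfl fun j _ => ?_
  refine sum_nbij' (·.erase j) (insert j ·) ?_ ?_ ?_ ?_ ?_ <;>
    simp only [mem_filter, mem_univ, true_and]
  · rintro A ⟨hA, hjA⟩
    exact ⟨by rw [card_erase_add_one hjA, hA], notMem_erase j A⟩
  · rintro B ⟨hB, hjB⟩
    exact ⟨by rw [card_insert_of_notMem hjB, hB], mem_insert_self j B⟩
  · rintro A ⟨-, hjA⟩
    exact insert_erase hjA
  · rintro B ⟨-, hjB⟩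
    exact erase_insert hjB
  · rintro A ⟨-, hjA⟩
    rw [insert_erase hjA]

theorem mul_sum_sq_le_sum_up_sq (g : Finset α → ℝ) (s : ℕ) :
    ((Fintype.card α : ℝ) - 2 * s) * ∑ B with #B = s, g B ^ 2 ≤
      ∑ A with #A = s + 1, up g A ^ 2 := by
  have hdown : ∑ B with #B = s, g B * up (down g) B = ∑ C with #C + 1 = s, down g C ^ 2 := by
    simp only [sq]
    rw [← sum_up_mul]
    exact sum_congr rfl fun _ _ => mul_comm _ _
  have hup : ∑ A with #A = s + 1, up g A ^ 2 = ∑ B with #B = s, g B * down (up g) B := by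
    simp_rw [sq, sum_up_mul, Nat.add_right_cancel_iff]
  calc ((Fintype.card α : ℝ) - 2 * s) * ∑ B with #B = s, g B ^ 2
      ≤ ∑ C with #C + 1 = s, down g C ^ 2 +
          ((Fintype.card α : ℝ) - 2 * s) * ∑ B with #B = s, g B ^ 2 :=
        le_add_of_nonneg_left (sum_nonneg fun _ _ => sq_nonneg _)
    _ = ∑ A with #A = s + 1, up g A ^ 2 := by
        rw [hup, ← hdown, mul_sum, ← sum_add_distrib]
        refine sum_congr rfl fun B hB => ?_
        rw [down_up_apply, (mem_filter.1 hB).2]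
        ring

theorem eq_zero_of_up_eq_zero {g : Finset α → ℝ} {s : ℕ} (hs : 2 * s < Fintype.card α)
    (h : ∀ A : Finset α, #A = s + 1 → up g A = 0) (B : Finset α) (hB : #B = s) : g B = 0 := by
  have hpos : (0 : ℝ) < Fintype.card α - 2 * s := by
    rw [sub_pos]
    exact_mod_cast hs
  have hup : ∑ A with #A = s + 1, up g A ^ 2 = 0 :=
    sum_eq_zero fun A hA => by rw [h A (mem_filter.1 hA).2, sq, zero_mul]
  have hle := mul_sum_sq_le_sum_up_sq g s
  rw [hup] at hle
  have hsum : ∑ B with #B = s, g B ^ 2 = 0 :=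
    le_antisymm (nonpos_of_mul_nonpos_right hle hpos) (sum_nonneg fun _ _ => sq_nonneg _)
  exact pow_eq_zero_iff two_ne_zero |>.1 <|
    (sum_eq_zero_iff_of_nonneg fun _ _ => sq_nonneg _).1 hsum B (by simp [hB])

theorem eq_zero_of_subsetSum_eq_zero {g : Finset α → ℝ} {r m : ℕ} (hrm : r ≤ m)
    (hm : 2 * m ≤ Fintype.card α + 1) (h : ∀ A : Finset α, #A = m → subsetSum r g A = 0)
    (B : Finset α) (hB : #B = r) : g B = 0 := by
  induction m, hrm using Nat.le_induction with
  | base => rw [← subsetSum_of_card_eq hB g]; exact h B hB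
  | succ m hrm ih =>
    refine ih (by omega) (eq_zero_of_up_eq_zero (by omega) fun A hA => ?_)
    rw [up_subsetSum, h A hA, mul_zero]

theorem down_subsetSum {r : ℕ} {g : Finset α → ℝ}
    (hg : ∀ R : Finset α, #R + 1 = r → down g R = 0) (A : Finset α) :
    down (subsetSum r g) A = ((Fintype.card α : ℝ) - #A - r) * subsetSum r g A := by
  induction A using Finset.strongInduction with
  | H A ih =>
    obtain hA | hA | hA : #A + 1 < r ∨ #A + 1 = r ∨ r ≤ #A := by omega
    · rw [subsetSum_of_card_lt (by omega), mul_zero, down_apply]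
      refine sum_eq_zero fun i hi => subsetSum_of_card_lt ?_ g
      rwa [card_insert_of_notMem (by simpa using hi)]
    · rw [subsetSum_of_card_lt (by omega), mul_zero, ← hg A hA, down_apply, down_apply]
      refine sum_congr rfl fun i hi => subsetSum_of_card_eq ?_ g
      rw [card_insert_of_notMem (by simpa using hi), hA]
    · set F := subsetSum r g
      have hdu : down (up F) A = ((#A : ℝ) + 1 - r) * down F A := by
        rw [down_apply, down_apply, mul_sum]
        refine sum_congr rfl fun i hi => ?_
        rw [up_subsetSum, card_insert_of_notMem (by simpa using hi), Nat.cast_succ]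
      have hud : up (down F) A = ((Fintype.card α : ℝ) - #A + 1 - r) * (#A - r) * F A := by
        rw [mul_assoc, ← up_subsetSum, up_apply, up_apply, mul_sum]
        refine sum_congr rfl fun j hj => ?_
        rw [ih _ (erase_ssubset hj), cast_card_erase_of_mem hj]
        ring
      have hne : ((#A : ℝ) + 1 - r) ≠ 0 := by
        have : (r : ℝ) ≤ #A := by exact_mod_cast hA
        linarith
      apply mul_left_cancel₀ hne
      have hcomm := down_up_apply F A
      rw [hdu, hud] at hcomm
      linear_combination hcomm

end Operators

section Harmonic

variable {α : Type*} [Fintype α]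

theorem card_subtype_card_add_one_eq (s : ℕ) :
    Fintype.card {R : Finset α // #R + 1 = s + 1} = (Fintype.card α).choose s := by
  simp only [Nat.add_right_cancel_iff, Fintype.card_finset_len]

theorem sum_range_choose_sub_card (m : ℕ) :
    ∑ r ∈ range (m + 1),
      ((Fintype.card α).choose r - Fintype.card {R : Finset α // #R + 1 = r} : ℤ) =
      (Fintype.card α).choose m := by
  induction m with
  | zero => simp
  | succ m ih => rw [sum_range_succ, ih, card_subtype_card_add_one_eq]; ring

variable [DecidableEq α]

/- Indexing the `(r - 1)`-sets by `#R + 1 = r` makes the condition on `down g` vacuous for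
`r = 0`, where the kernel consists of the functions supported on `∅`. -/
def harmonicConstraints (r : ℕ) :
    (Finset α → ℝ) →ₗ[ℝ] ({R : Finset α // #R + 1 = r} → ℝ) × ({B : Finset α // #B ≠ r} → ℝ) :=
  (LinearMap.funLeft ℝ ℝ Subtype.val ∘ₗ down).prod (LinearMap.funLeft ℝ ℝ Subtype.val)

def harmonic (r : ℕ) : Submodule ℝ (Finset α → ℝ) :=
  LinearMap.ker (harmonicConstraints r)

theorem mem_harmonic {r : ℕ} {g : Finset α → ℝ} :
    g ∈ harmonic r ↔
      (∀ R : Finset α, #R + 1 = r → down g R = 0) ∧ ∀ B : Finset α, #B ≠ r → g B = 0 := by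
  simp [harmonic, harmonicConstraints, funext_iff]

theorem choose_le_finrank_harmonic_add (r : ℕ) :
    (Fintype.card α).choose r ≤
      finrank ℝ (harmonic (α := α) r) + Fintype.card {R : Finset α // #R + 1 = r} := by
  have hrank := LinearMap.finrank_range_add_finrank_ker (harmonicConstraints (α := α) r)
  have hrange := Submodule.finrank_le (LinearMap.range (harmonicConstraints (α := α) r))
  have hoff : Fintype.card {B : Finset α // #B ≠ r} + (Fintype.card α).choose r =
      Fintype.card (Finset α) := by
    have hle := Fintype.card_subtype_le (fun B : Finset α => #B = r)
    rw [Fintype.card_finset_len] at hle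
    rw [Fintype.card_subtype_compl, Fintype.card_finset_len]
    omega
  rw [finrank_prod, finrank_fintype_fun_eq_card, finrank_fintype_fun_eq_card] at hrange
  rw [finrank_fintype_fun_eq_card] at hrank
  rw [harmonic]
  omega

end Harmonic

section Eigenspaces

variable {K V : Type*} [Field K] [AddCommGroup V] [Module K V] [FiniteDimensional K V]

theorem sum_finrank_eigenspace_le (f : Module.End K V) (s : Finset K) :
    ∑ μ ∈ s, finrank K (f.eigenspace μ) ≤ finrank K V := by
  classical
  rw [← sum_coe_sort, ← finrank_directSum]
  exact LinearMap.finrank_le_finrank_of_injective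
    ((f.eigenspaces_iSupIndep.comp Subtype.val_injective).dfinsupp_lsum_injective)

theorem finrank_eigenspace_le_neg {f σ : Module.End K V} (hσ : Function.Injective σ)
    (hfσ : f * σ = -(σ * f)) (μ : K) :
    finrank K (f.eigenspace μ) ≤ finrank K (f.eigenspace (-μ)) := by
  have hmap : (f.eigenspace μ).map σ ≤ f.eigenspace (-μ) := by
    rintro _ ⟨v, hv, rfl⟩
    rw [SetLike.mem_coe, Module.End.mem_eigenspace_iff] at hv
    rw [Module.End.mem_eigenspace_iff]
    have hcomm := LinearMap.congr_fun hfσ v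
    simp only [Module.End.mul_apply, LinearMap.neg_apply, hv, map_smul] at hcomm
    rw [hcomm, neg_smul]
  calc finrank K (f.eigenspace μ) = finrank K ((f.eigenspace μ).map σ) :=
        ((f.eigenspace μ).equivMapOfInjective σ hσ).finrank_eq
    _ ≤ _ := Submodule.finrank_mono hmap

end Eigenspaces

section Graph

open Matrix

variable {n k : ℕ}

theorem midAdj_mulVec_of_card_eq (F : Finset (Fin n) → ℝ) {A : MidVert n k} (hA : #A.1 = k) :
    (midAdj n k *ᵥ fun B => F B.1) A = down F A.1 := by
  simp only [mulVec, dotProduct, midAdj, boole_mul]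
  rw [← sum_filter, down_apply]
  symm
  refine sum_bij (fun i hi => ⟨insert i A.1, Or.inr ?_⟩) (fun i hi => ?_) (fun i hi j hj h => ?_)
    (fun B hB => ?_) (fun _ _ => rfl)
  · rw [card_insert_of_notMem (by simpa using hi), hA]
  · exact mem_filter.2 ⟨mem_univ _, Or.inl (ssubset_insert (by simpa using hi))⟩
  · exact (insert_inj (by simpa using hi)).1 (congrArg Subtype.val h)
  · rcases (mem_filter.1 hB).2 with hAB | hBA
    · have := card_lt_card hAB
      obtain ⟨i, hi, hiB⟩ :=
        exists_eq_insert_iff.2 ⟨hAB.subset, by rcases B.2 with h | h <;> omega⟩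
      exact ⟨i, mem_compl.2 hi, Subtype.ext hiB⟩
    · have := card_lt_card hBA
      rcases B.2 with h | h <;> omega

theorem midAdj_mulVec_of_card_eq_succ (F : Finset (Fin n) → ℝ) {A : MidVert n k}
    (hA : #A.1 = k + 1) : (midAdj n k *ᵥ fun B => F B.1) A = up F A.1 := by
  simp only [mulVec, dotProduct, midAdj, boole_mul]
  rw [← sum_filter, up_apply]
  symm
  refine sum_bij (fun j hj => ⟨A.1.erase j, Or.inl ?_⟩) (fun j hj => ?_) (fun i hi j hj h => ?_)
    (fun B hB => ?_) (fun _ _ => rfl)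
  · rw [card_erase_of_mem hj, hA, Nat.add_sub_cancel]
  · exact mem_filter.2 ⟨mem_univ _, Or.inr (erase_ssubset hj)⟩
  · exact (erase_inj A.1 hi).1 (congrArg Subtype.val h)
  · rcases (mem_filter.1 hB).2 with hAB | hBA
    · have := card_lt_card hAB
      rcases B.2 with h | h <;> omega
    · have := card_lt_card hBA
      obtain ⟨j, hj, hjB⟩ :=
        exists_eq_insert_iff.2 ⟨hBA.subset, by rcases B.2 with h | h <;> omega⟩
      refine ⟨j, hjB ▸ mem_insert_self j B.1, Subtype.ext ?_⟩
      simp only [← hjB, erase_insert hj]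

def levelSign (n k : ℕ) : Matrix (MidVert n k) (MidVert n k) ℝ :=
  diagonal fun A => if #A.1 = k then 1 else -1

theorem midAdj_mul_levelSign : midAdj n k * levelSign n k = -(levelSign n k * midAdj n k) := by
  ext A B
  simp only [levelSign, midAdj, Matrix.mul_diagonal, Matrix.diagonal_mul, Matrix.neg_apply]
  by_cases hAB : A.1 ⊂ B.1 ∨ B.1 ⊂ A.1
  · have hlevel : #A.1 = k ↔ #B.1 ≠ k := by
      rcases hAB with h | h <;> have := card_lt_card h <;> rcases A.2 with hA | hA <;>
        rcases B.2 with hB | hB <;> omega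
    rw [if_pos hAB]
    split_ifs <;> norm_num <;> tauto
  · simp only [if_neg hAB, zero_mul, mul_zero, neg_zero]

theorem levelSign_mul_self : levelSign n k * levelSign n k = 1 := by
  simp only [levelSign, diagonal_mul_diagonal, ← diagonal_one]
  congr 1
  funext A
  split_ifs <;> norm_num

theorem finrank_eigenspace_midAdj_le_neg (μ : ℝ) :
    finrank ℝ (Module.End.eigenspace (toLin' (midAdj n k)) μ) ≤
      finrank ℝ (Module.End.eigenspace (toLin' (midAdj n k)) (-μ)) := by
  refine finrank_eigenspace_le_neg (σ := toLin' (levelSign n k)) ?_ ?_ μ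
  · refine Function.LeftInverse.injective (g := toLin' (levelSign n k)) fun v => ?_
    rw [← LinearMap.comp_apply, ← toLin'_mul, levelSign_mul_self, toLin'_one, LinearMap.id_apply]
  · rw [Module.End.mul_eq_comp, Module.End.mul_eq_comp, ← toLin'_mul, ← toLin'_mul,
      midAdj_mul_levelSign, map_neg]

theorem card_midVert : Fintype.card (MidVert n k) = n.choose k + n.choose (k + 1) := by
  rw [Fintype.card_subtype_or_disjoint _ _ fun _ h h' B hB => by
      have := h B hB; have := h' B hB; simp_all,
    Fintype.card_finset_len, Fintype.card_finset_len, Fintype.card_fin]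

end Graph

theorem subsetSum_mem_eigenspace {k r : ℕ} {g : Finset (Fin (2 * k + 1)) → ℝ}
    (hg : ∀ R : Finset (Fin (2 * k + 1)), #R + 1 = r → down g R = 0) :
    (fun A : MidVert (2 * k + 1) k => subsetSum r g A.1) ∈
      Module.End.eigenspace (Matrix.toLin' (midAdj (2 * k + 1) k)) ((k : ℝ) + 1 - r) := by
  rw [Module.End.mem_eigenspace_iff, Matrix.toLin'_apply]
  funext A
  rw [Pi.smul_apply, smul_eq_mul]
  rcases A.2 with hA | hA
  · rw [midAdj_mulVec_of_card_eq _ hA, down_subsetSum hg, Fintype.card_fin, hA]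
    push_cast
    ring
  · rw [midAdj_mulVec_of_card_eq_succ _ hA, up_subsetSum, hA]
    push_cast
    ring

def subsetSumMid (k r : ℕ) :
    (Finset (Fin (2 * k + 1)) → ℝ) →ₗ[ℝ] (MidVert (2 * k + 1) k → ℝ) :=
  LinearMap.funLeft ℝ ℝ Subtype.val ∘ₗ subsetSum r

theorem map_harmonic_le_eigenspace (k r : ℕ) :
    (harmonic r).map (subsetSumMid k r) ≤
      Module.End.eigenspace (Matrix.toLin' (midAdj (2 * k + 1) k)) ((k : ℝ) + 1 - r) := by
  rintro _ ⟨g, hg, rfl⟩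
  exact subsetSum_mem_eigenspace (mem_harmonic.1 hg).1

theorem finrank_map_harmonic {k r : ℕ} (hrk : r ≤ k) :
    finrank ℝ ((harmonic r).map (subsetSumMid k r)) =
      finrank ℝ (harmonic (α := Fin (2 * k + 1)) r) := by
  rw [← LinearMap.range_domRestrict]
  refine LinearMap.finrank_range_of_inj <| LinearMap.ker_eq_bot.1 <|
    LinearMap.ker_eq_bot'.2 fun ⟨g, hg⟩ h0 => Subtype.ext <| funext fun B => ?_
  obtain ⟨-, hoff⟩ := mem_harmonic.1 hg
  by_cases hB : #B = r
  · refine eq_zero_of_subsetSum_eq_zero hrk (by rw [Fintype.card_fin]; omega) (fun A hA => ?_) B hB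
    exact congrFun h0 ⟨A, Or.inl hA⟩
  · exact hoff B hB

theorem choose_le_finrank_eigenspace_add {k r : ℕ} (hrk : r ≤ k) :
    (2 * k + 1).choose r ≤
      finrank ℝ (Module.End.eigenspace (Matrix.toLin' (midAdj (2 * k + 1) k)) ((k : ℝ) + 1 - r)) +
        Fintype.card {R : Finset (Fin (2 * k + 1)) // #R + 1 = r} := by
  have h := choose_le_finrank_harmonic_add (α := Fin (2 * k + 1)) r
  rw [Fintype.card_fin, ← finrank_map_harmonic hrk] at h
  exact h.trans (Nat.add_le_add_right (Submodule.finrank_mono (map_harmonic_le_eigenspace k r)) _)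

theorem sum_finrank_eigenspace_le_choose (k : ℕ) :
    ∑ r ∈ range (k + 1), finrank ℝ
      (Module.End.eigenspace (Matrix.toLin' (midAdj (2 * k + 1) k)) ((k : ℝ) + 1 - r)) ≤
        (2 * k + 1).choose k := by
  have hinj : Set.InjOn (fun r : ℕ => (k : ℝ) + 1 - r) (range (k + 1)) :=
    fun r _ r' _ h => by simpa using h
  have hpos : ∀ μ ∈ (range (k + 1)).image fun r : ℕ => (k : ℝ) + 1 - r, 0 < μ := by
    simp only [mem_image, mem_range, forall_exists_index, and_imp]
    rintro _ r hr rfl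
    have : (r : ℝ) < k + 1 := by exact_mod_cast hr
    linarith
  have hdisj : Disjoint ((range (k + 1)).image fun r : ℕ => (k : ℝ) + 1 - r)
      (((range (k + 1)).image fun r : ℕ => (k : ℝ) + 1 - r).image Neg.neg) := by
    refine disjoint_left.2 fun μ hμ hμ' => ?_
    obtain ⟨ν, hν, rfl⟩ := mem_image.1 hμ'
    linarith [hpos _ hμ, hpos _ hν]
  have htotal := sum_finrank_eigenspace_le (Matrix.toLin' (midAdj (2 * k + 1) k))
    (((range (k + 1)).image fun r : ℕ => (k : ℝ) + 1 - r) ∪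
      ((range (k + 1)).image fun r : ℕ => (k : ℝ) + 1 - r).image Neg.neg)
  rw [sum_union hdisj, sum_image neg_injective.injOn, sum_image hinj, sum_image hinj,
    finrank_fintype_fun_eq_card, card_midVert, Nat.choose_symm_half] at htotal
  have hneg := sum_le_sum fun r (_ : r ∈ range (k + 1)) =>
    finrank_eigenspace_midAdj_le_neg (n := 2 * k + 1) (k := k) ((k : ℝ) + 1 - r)
  omega

theorem finrank_eigenspace_add_card {k r : ℕ} (hrk : r ≤ k) :
    finrank ℝ (Module.End.eigenspace (Matrix.toLin' (midAdj (2 * k + 1) k)) ((k : ℝ) + 1 - r)) +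
        Fintype.card {R : Finset (Fin (2 * k + 1)) // #R + 1 = r} = (2 * k + 1).choose r := by
  have hlow : ∀ r ∈ range (k + 1),
      ((2 * k + 1).choose r - Fintype.card {R : Finset (Fin (2 * k + 1)) // #R + 1 = r} : ℤ) ≤
        finrank ℝ (Module.End.eigenspace (Matrix.toLin' (midAdj (2 * k + 1) k))
          ((k : ℝ) + 1 - r)) := fun r hr => by
    have := choose_le_finrank_eigenspace_add (mem_range_succ_iff.1 hr)
    omega
  have hsum := sum_finrank_eigenspace_le_choose k
  have htele := sum_range_choose_sub_card (α := Fin (2 * k + 1)) k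
  rw [Fintype.card_fin] at htele
  have heq := (sum_eq_sum_iff_of_le hlow).1 (le_antisymm (sum_le_sum hlow) (by
    rw [htele]; exact_mod_cast hsum)) r (mem_range_succ_iff.2 hrk)
  omega

theorem eigenspace_eq_map_harmonic {k r : ℕ} (hrk : r ≤ k) :
    Module.End.eigenspace (Matrix.toLin' (midAdj (2 * k + 1) k)) ((k : ℝ) + 1 - r) =
      (harmonic r).map (subsetSumMid k r) := by
  have hharm := choose_le_finrank_harmonic_add (α := Fin (2 * k + 1)) r
  rw [Fintype.card_fin, ← finrank_map_harmonic hrk] at hharm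
  have heig := finrank_eigenspace_add_card hrk
  have key : finrank ℝ
      (Module.End.eigenspace (Matrix.toLin' (midAdj (2 * k + 1) k)) ((k : ℝ) + 1 - r)) ≤
        finrank ℝ ((harmonic r).map (subsetSumMid k r)) := by
    omega
  exact (Submodule.eq_of_le_of_finrank_le (map_harmonic_le_eigenspace k r) key).symm

end MiddleCube

theorem middle_cube_eigenspace_general (k r : ℕ) (hr : 1 ≤ r) (hrk : r ≤ k) :
    (Module.End.eigenspace (Matrix.toLin' (midAdj (2 * k + 1) k)) ((k : ℝ) + 1 - r)
        : Set (MidVert (2 * k + 1) k → ℝ)) =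
      {v | ∃ g : Finset (Fin (2 * k + 1)) → ℝ,
        (∀ R : Finset (Fin (2 * k + 1)), R.card = r - 1 →
          ∑ i ∈ Rᶜ, g (insert i R) = 0) ∧
        ∀ A : MidVert (2 * k + 1) k, v A = ∑ B ∈ A.1.powersetCard r, g B} ∧
    Module.finrank ℝ
        (Module.End.eigenspace (Matrix.toLin' (midAdj (2 * k + 1) k))
          ((k : ℝ) + 1 - r)) =
      (2 * k + 1).choose r - (2 * k + 1).choose (r - 1) := by
  obtain ⟨s, rfl⟩ : ∃ s, r = s + 1 := ⟨r - 1, by omega⟩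
  have hcard := MiddleCube.card_subtype_card_add_one_eq (α := Fin (2 * k + 1)) s
  rw [Fintype.card_fin] at hcard
  refine ⟨Set.Subset.antisymm ?_ ?_, ?_⟩
  · intro v hv
    rw [SetLike.mem_coe, MiddleCube.eigenspace_eq_map_harmonic hrk] at hv
    obtain ⟨g, hg, rfl⟩ := hv
    exact ⟨g, fun R hR => (MiddleCube.mem_harmonic.1 hg).1 R (by omega), fun A => rfl⟩
  · rintro v ⟨g, hg, hv⟩
    rw [show v = fun A => MiddleCube.subsetSum (s + 1) g A.1 from funext hv]
    exact MiddleCube.subsetSum_mem_eigenspace fun R hR => hg R (by omega)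
  · have := MiddleCube.finrank_eigenspace_add_card hrk
    rw [Nat.add_sub_cancel]
    omega

/-- Let `n = 2k+1` with `k ≥ 1` and `1 ≤ r ≤ k`. The eigenspace of the adjacency
matrix of the middle-cube `M_n` for the eigenvalue `k+1−r` is exactly the set of
vectors `(f(A))_A` indexed by the vertices `A` of `M_n`, where
`f(A) = ∑_{B ⊆ A, |B| = r} g(B)` and `g` ranges over all assignments of reals to the
`r`-subsets of `S` satisfying: for every `(r−1)`-subset `R` of `S`,
`∑_{i ∈ S∖R} g(R ∪ {i}) = 0`. In particular, this eigenspace has dimension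
`C(n, r) − C(n, r−1)`. -/
theorem middle_cube_eigenspace (k r : ℕ) (hk : 1 ≤ k) (hr : 1 ≤ r) (hrk : r ≤ k) :
    (Module.End.eigenspace (Matrix.toLin' (midAdj (2 * k + 1) k)) ((k : ℝ) + 1 - r)
        : Set (MidVert (2 * k + 1) k → ℝ)) =
      {v | ∃ g : Finset (Fin (2 * k + 1)) → ℝ,
        (∀ R : Finset (Fin (2 * k + 1)), R.card = r - 1 →
          ∑ i ∈ Rᶜ, g (insert i R) = 0) ∧
        ∀ A : MidVert (2 * k + 1) k, v A = ∑ B ∈ A.1.powersetCard r, g B} ∧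
    Module.finrank ℝ
        (Module.End.eigenspace (Matrix.toLin' (midAdj (2 * k + 1) k))
          ((k : ℝ) + 1 - r)) =
      (2 * k + 1).choose r - (2 * k + 1).choose (r - 1) :=
  middle_cube_eigenspace_general k r hr hrk
end
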